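/- arXiv:2211.09055 — 7 statements merged into one kernel-verified Lean document; each statement's English description precedes it below -/
import Mathlib

section
/- For all real numbers p, p' with 0 ≤ p ≤ 0.1 and 0 ≤ p' ≤ 0.1, the binary entropy satisfies H(p + p' - p·p') ≥ 1.4 · (H(p) + H(p'))/2, where H(x) = -x·log₂(x) - (1-x)·log₂(1-x) (with H(0) = H(1) = 0). -/
open Finset

attribute [local instance] Classical.propDecidable

/-- Binary entropy function (base 2). Since `Real.logb 2 0 = 0`, `binEnt 0 = binEnt 1 = 0`. -/
noncomputable def binEnt (x : ℝ) : ℝ :=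
  -x * Real.logb 2 x - (1 - x) * Real.logb 2 (1 - x)

private lemma negLogOneSub (x : ℝ) (h1 : x < 1) :
    -(1 - x) * Real.log (1 - x) ≤ x := by
  have h1x : (0:ℝ) < 1 - x := by linarith
  have hpos : (0:ℝ) < (1 - x)⁻¹ := by positivity
  have h := Real.log_le_sub_one_of_pos hpos
  rw [Real.log_inv] at h
  have hx : (1 - x)⁻¹ - 1 = x / (1 - x) := by field_simp; ring
  rw [hx] at h
  have h2 := mul_le_mul_of_nonneg_left h (le_of_lt h1x)
  have hd : (1 - x) * (x / (1 - x)) = x := by field_simp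
  nlinarith

private lemma sumLog (p s : ℝ) (hp : 0 ≤ p) (hs : 0 < s) :
    p * (Real.log s - Real.log 2 - Real.log p) ≤ s / 2 - p := by
  rcases eq_or_lt_of_le hp with h | h
  · rw [← h]; simp; linarith
  · have hx : 0 < s / (2 * p) := by positivity
    have hlb := Real.log_le_sub_one_of_pos hx
    have hlog : Real.log (s / (2 * p)) = Real.log s - Real.log 2 - Real.log p := by
      rw [Real.log_div hs.ne' (by positivity), Real.log_mul two_ne_zero h.ne']; ring
    rw [hlog] at hlb
    have h2 := mul_le_mul_of_nonneg_left hlb (le_of_lt h)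
    have hd : p * (s / (2 * p) - 1) = s / 2 - p := by field_simp
    linarith [hd ▸ h2]

set_option maxHeartbeats 2000000 in
theorem stmt0 (p p' : ℝ) (hp0 : 0 ≤ p) (hp1 : p ≤ 0.1) (hp'0 : 0 ≤ p') (hp'1 : p' ≤ 0.1) :
    binEnt (p + p' - p * p') ≥ 1.4 * ((binEnt p + binEnt p') / 2) := by
  have l2pos : (0:ℝ) < Real.log 2 := Real.log_pos (by norm_num)
  by_cases hs0 : p + p' = 0
  · have hp : p = 0 := by linarith
    have hp' : p' = 0 := by linarith
    subst hp; subst hp'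
    norm_num [binEnt, Real.logb]
  · have hs0' : 0 < p + p' := lt_of_le_of_ne (by linarith) (Ne.symm hs0)
    obtain ⟨s, hsdef⟩ : ∃ x : ℝ, x = p + p' := ⟨_, rfl⟩
    obtain ⟨q, hqdef⟩ : ∃ x : ℝ, x = p + p' - p * p' := ⟨_, rfl⟩
    rw [← hqdef]
    have hs : 0 < s := by rw [hsdef]; linarith
    have hs2 : s ≤ 0.2 := by rw [hsdef]; linarith
    have hpp : p * p' ≤ s ^ 2 / 4 := by nlinarith [sq_nonneg (p - p')]
    have hpps : p * p' ≤ 0.05 * s := by nlinarith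
    have hq_lb : s - s ^ 2 / 4 ≤ q := by rw [hqdef]; nlinarith
    have hq_lb2 : 0.95 * s ≤ q := by nlinarith
    have hq0 : 0 < q := by nlinarith
    have hqs : q ≤ s := by rw [hqdef, hsdef]; nlinarith
    have hq1 : q < 1 := by linarith
    -- log bounds
    have L2lo : (0.6931471803:ℝ) < Real.log 2 := Real.log_two_gt_d9
    have L2hi : Real.log 2 < 0.6931471808 := Real.log_two_lt_d9
    have L5 : 2 * Real.log 2 + 0.2 ≤ Real.log 5 := by
      have h45 : Real.log (4 / 5) ≤ 4 / 5 - 1 := Real.log_le_sub_one_of_pos (by norm_num)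
      have : Real.log (4 / 5) = 2 * Real.log 2 - Real.log 5 := by
        rw [Real.log_div (by norm_num) (by norm_num)]
        rw [show (4:ℝ) = 2 ^ 2 by norm_num, Real.log_pow]
        push_cast; ring
      linarith [h45, this]
    have hM : Real.log 5 + 1 - 5 * s ≤ -Real.log s := by
      have h5s : Real.log (5 * s) ≤ 5 * s - 1 := Real.log_le_sub_one_of_pos (by linarith)
      rw [Real.log_mul (by norm_num) hs.ne'] at h5s
      linarith
    -- h1 : q * (1 - q) ≤ -(1-q) * log (1-q)
    have h1 : q * (1 - q) ≤ -(1 - q) * Real.log (1 - q) := by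
      have := Real.log_le_sub_one_of_pos (show (0:ℝ) < 1 - q by linarith)
      nlinarith
    -- h2, h2'
    have h2 : -(1 - p) * Real.log (1 - p) ≤ p := negLogOneSub p (by linarith)
    have h2' : -(1 - p') * Real.log (1 - p') ≤ p' := negLogOneSub p' (by linarith)
    -- h3 : -p log p - p' log p' ≤ -s log s + s log 2
    have h3 : -(p * Real.log p) - p' * Real.log p' ≤ -(s * Real.log s) + s * Real.log 2 := by
      have a1 := sumLog p s hp0 hs
      have a2 := sumLog p' s hp'0 hs
      have : p * Real.log s + p' * Real.log s = s * Real.log s := by rw [hsdef]; ring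
      nlinarith [a1, a2]
    -- h4 : s * (log q - log s) ≤ q - s
    have h4 : s * (Real.log q - Real.log s) ≤ q - s := by
      have hx : 0 < q / s := div_pos hq0 hs
      have hlb := Real.log_le_sub_one_of_pos hx
      rw [Real.log_div hq0.ne' hs.ne'] at hlb
      have h2 := mul_le_mul_of_nonneg_left hlb hs.le
      have hd : s * (q / s - 1) = q - s := by field_simp
      linarith [h2, hd]
    -- h5 : -log q ≤ -log s + 0.06
    have h5 : -Real.log q ≤ -Real.log s + 0.06 := by
      have hmono : Real.log (s * (1 - s / 4)) ≤ Real.log q := by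
        apply Real.log_le_log (by nlinarith)
        nlinarith
      have hne : (1 - s / 4 : ℝ) ≠ 0 := by nlinarith
      rw [Real.log_mul hs.ne' hne] at hmono
      have hinv : (0:ℝ) < (1 - s / 4)⁻¹ := by rw [inv_pos]; nlinarith
      have h := Real.log_le_sub_one_of_pos hinv
      rw [Real.log_inv] at h
      have hkey : (1 - s / 4)⁻¹ - 1 ≤ 0.06 := by
        have h19 : (0.95:ℝ) ≤ 1 - s / 4 := by linarith
        have : (1 - s / 4)⁻¹ ≤ (0.95:ℝ)⁻¹ := by
          apply inv_anti₀ (by norm_num) h19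
        have : ((0.95:ℝ))⁻¹ ≤ 1.06 := by norm_num
        linarith [inv_anti₀ (show (0:ℝ) < 0.95 by norm_num) h19]
      linarith
    -- step2 : -(q log q) ≥ -(s log s) - pp' * (-log q - 1)
    have step2 : -(s * Real.log s) - (p * p') * (-Real.log q - 1) ≤ -(q * Real.log q) := by
      have hqp : q + p * p' = s := by rw [hqdef, hsdef]; ring
      nlinarith [h4]
    -- step3
    have step3 : (p * p') * (-Real.log q - 1) ≤ s ^ 2 / 4 * (-Real.log s - 0.94) := by
      have hY : (0:ℝ) ≤ -Real.log s - 0.94 := by linarith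
      have hX : -Real.log q - 1 ≤ -Real.log s - 0.94 := by linarith
      have := mul_le_mul_of_nonneg_left hX (mul_nonneg hp0 hp'0)
      nlinarith [mul_le_mul_of_nonneg_right hpp hY]
    -- step4
    have step4 : (0.95 * s) * (1 - s) ≤ q * (1 - q) := by
      have := mul_le_mul hq_lb2 (show (1:ℝ) - s ≤ 1 - q by linarith) (by linarith) hq0.le
      linarith
    -- final polynomial inequality
    have final : 0.3 * (s * (-Real.log s)) - s ^ 2 / 4 * (-Real.log s - 0.94)
        + 0.95 * s * (1 - s) - 0.7 * s * Real.log 2 - 0.7 * s ≥ 0 := by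
      set M : ℝ := -Real.log s with hMdef
      have hMlb : Real.log 5 + 1 - 5 * s ≤ M := hM
      have hMlb2 : 2 * Real.log 2 + 1.2 - 5 * s ≤ M := by linarith
      nlinarith [mul_nonneg (mul_nonneg hs.le (show (0:ℝ) ≤ 0.3 - s / 4 by linarith))
        (show (0:ℝ) ≤ M - (2 * Real.log 2 + 1.2 - 5 * s) by linarith),
        mul_nonneg hs.le (show (0:ℝ) ≤ 0.2 - s by linarith),
        mul_nonneg (mul_nonneg hs.le hs.le) (show (0:ℝ) ≤ 0.2 - s by linarith),
        sq_nonneg (s - 0.2)]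
    -- assemble key inequality in natural logs
    have key : -(q * Real.log q) - (1 - q) * Real.log (1 - q) ≥
        0.7 * ((-(p * Real.log p) - (1 - p) * Real.log (1 - p)) +
               (-(p' * Real.log p') - (1 - p') * Real.log (1 - p'))) := by
      nlinarith [h1, h2, h2', h3, step2, step3, step4, final]
    -- convert to logb
    have hexp : binEnt q - 1.4 * ((binEnt p + binEnt p') / 2) =
        ((-(q * Real.log q) - (1 - q) * Real.log (1 - q)) -
         0.7 * ((-(p * Real.log p) - (1 - p) * Real.log (1 - p)) +
                (-(p' * Real.log p') - (1 - p') * Real.log (1 - p')))) / Real.log 2 := by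
      simp only [binEnt, Real.logb]
      field_simp
      ring
    have : 0 ≤ binEnt q - 1.4 * ((binEnt p + binEnt p') / 2) := by
      rw [hexp]
      exact div_nonneg (by linarith [key]) l2pos.le
    rw [ge_iff_le, ← sub_nonneg]
    exact this
end

section
/- For all p, p' ∈ [0,1], the binary entropy satisfies H(p + p' - p·p') ≥ (1 - p)·H(p'). -/
open Finset

attribute [local instance] Classical.propDecidable

lemma binEnt_eq (x : ℝ) : binEnt x = Real.binEntropy x / Real.log 2 := by
  simp [binEnt, Real.binEntropy, Real.logb, Real.log_inv]
  ring

theorem stmt1 (p p' : ℝ) (hp : p ∈ Set.Icc (0:ℝ) 1) (hp' : p' ∈ Set.Icc (0:ℝ) 1) :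
    binEnt (p + p' - p * p') ≥ (1 - p) * binEnt p' := by
  obtain ⟨hp0, hp1⟩ := hp
  obtain ⟨hp'0, hp'1⟩ := hp'
  have key : Real.binEntropy ((1 - p) * (1 - p')) ≥
      (1 - p) * Real.binEntropy (1 - p') + p * Real.binEntropy 0 := by
    have m1 : (1 - p') ∈ Set.Icc (0:ℝ) 1 := ⟨by linarith, by linarith⟩
    have m2 : (0:ℝ) ∈ Set.Icc (0:ℝ) 1 := ⟨le_refl 0, by norm_num⟩
    have ha : (0:ℝ) ≤ 1 - p := by linarith
    have hab : (1 - p) + p = 1 := by ring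
    have hc := Real.strictConcave_binEntropy.concaveOn.2 m1 m2 ha hp0 hab
    simpa [smul_eq_mul] using hc
  have h0 : Real.binEntropy 0 = 0 := Real.binEntropy_zero
  rw [h0, mul_zero, add_zero] at key
  have heq : p + p' - p * p' = 1 - (1 - p) * (1 - p') := by ring
  rw [heq, binEnt_eq, binEnt_eq, Real.binEntropy_one_sub]
  have hsym : Real.binEntropy (1 - p') = Real.binEntropy p' := Real.binEntropy_one_sub p'
  rw [hsym] at key
  have hlog : (0:ℝ) < Real.log 2 := Real.log_pos (by norm_num)
  rw [ge_iff_le, ← mul_div_assoc, div_le_div_iff_of_pos_right hlog]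
  exact key
end

section
/- Let S be a finite set, q : S → [0,1] a probability mass function, and p : S → [0,1]. Assume Σ_c q(c)·p(c) ≤ 0.01. Then Σ_{c,c'} q(c)·q(c')·H(p(c) + p(c') - p(c)·p(c')) ≥ 1.26 · Σ_c q(c)·H(p(c)), where H is the binary entropy function. -/
open Finset

attribute [local instance] Classical.propDecidable

lemma binEntropy_form (x : ℝ) :
    Real.binEntropy x = -x * Real.log x - (1 - x) * Real.log (1 - x) := by
  simp [Real.binEntropy, Real.log_inv]; ring

-- chord bound from concavity
lemma chord (lam t : ℝ) (h0 : 0 ≤ lam) (h1 : lam ≤ 1) (hb0 : 0 ≤ t) (hb1 : t ≤ 1) :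
    lam * Real.binEntropy t ≤ Real.binEntropy (lam * t) := by
  have hc := Real.strictConcave_binEntropy.concaveOn.2
    (Set.mem_Icc.2 ⟨hb0, hb1⟩) (Set.mem_Icc.2 ⟨le_refl (0:ℝ), zero_le_one⟩)
    h0 (show (0:ℝ) ≤ 1 - lam by linarith) (by ring)
  simpa [Real.binEntropy_zero, smul_eq_mul] using hc

-- universal lower bound: H(x+y-xy) ≥ (1-x) H(y)
lemma lowerB (x y : ℝ) (hx0 : 0 ≤ x) (hx1 : x ≤ 1) (hy0 : 0 ≤ y) (hy1 : y ≤ 1) :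
    (1 - x) * Real.binEntropy y ≤ Real.binEntropy (x + y - x * y) := by
  have h1 : Real.binEntropy (x + y - x * y) = Real.binEntropy ((1 - x) * (1 - y)) := by
    rw [← Real.binEntropy_one_sub (x + y - x * y)]
    ring_nf
  rw [h1, ← Real.binEntropy_one_sub y]
  exact chord (1 - x) (1 - y) (by linarith) (by linarith) (by linarith) (by linarith)

-- numeric chord bound below 1/16
lemma chord16 (p : ℝ) (h0 : 0 ≤ p) (h1 : p ≤ 1 / 16) :
    (4 * Real.log 2 + 15 / 16) * p ≤ Real.binEntropy p := by
  have h16 : Real.binEntropy (1 / 16 : ℝ) ≥ Real.log 2 / 4 + 15 / 256 := by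
    have e : Real.binEntropy (1 / 16 : ℝ)
        = (1 / 16) * Real.log 16 + (15 / 16) * Real.log ((16 : ℝ) / 15) := by
      rw [Real.binEntropy]
      norm_num
    have l16 : Real.log (16 : ℝ) = 4 * Real.log 2 := by
      rw [show (16 : ℝ) = 2 ^ 4 by norm_num, Real.log_pow]; push_cast; ring
    have l1615 : (1 : ℝ) / 16 ≤ Real.log ((16 : ℝ) / 15) := by
      have := Real.log_le_sub_one_of_pos (show (0:ℝ) < 15 / 16 by norm_num)
      have e2 : Real.log ((16 : ℝ) / 15) = - Real.log ((15 : ℝ) / 16) := by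
        rw [← Real.log_inv]; norm_num
      rw [e2]; linarith
    rw [e, l16]; nlinarith
  have hc := chord (16 * p) (1 / 16) (by linarith) (by linarith) (by norm_num) (by norm_num)
  have e3 : 16 * p * (1 / 16 : ℝ) = p := by ring
  rw [e3] at hc
  nlinarith [Real.log_two_gt_d9]

-- key pointwise bound for small x, y
set_option maxHeartbeats 1600000 in
lemma claimA (x y : ℝ) (hx0 : 0 ≤ x) (hx1 : x ≤ 1 / 16) (hy0 : 0 ≤ y) (hy1 : y ≤ 1 / 16) :
    Real.binEntropy x + Real.binEntropy y
      - (9 / 8 * Real.log 2 + 1 / 16) * (x + y) ≤ Real.binEntropy (x + y - x * y) := by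
  have hL : (0.6931471803 : ℝ) < Real.log 2 := Real.log_two_gt_d9
  rcases eq_or_lt_of_le hx0 with h | hx0'
  · rw [← h]
    simp only [Real.binEntropy_zero, zero_add, zero_mul, sub_zero]
    nlinarith [hL, hy0]
  rcases eq_or_lt_of_le hy0 with h | hy0'
  · rw [← h]
    simp only [Real.binEntropy_zero, add_zero, mul_zero, sub_zero]
    nlinarith [hL, hx0]
  have hu0 : (0:ℝ) < x + y := by linarith
  have hu8 : x + y ≤ 1 / 8 := by linarith
  have hxy0 : 0 < x * y := by positivity
  have hxyu : x * y ≤ (x + y) ^ 2 / 4 := by nlinarith [sq_nonneg (x - y)]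
  have hs0 : (0:ℝ) < x + y - x * y := by nlinarith
  have hsu2 : (x + y) / 2 ≤ x + y - x * y := by nlinarith
  -- T1 : u log u - x log x - y log y ≤ u * log 2
  have t1 : (x + y) * Real.log (x + y) - x * Real.log x - y * Real.log y
      ≤ (x + y) * Real.log 2 := by
    have bx : Real.log ((x + y) / (2 * x)) ≤ (x + y) / (2 * x) - 1 :=
      Real.log_le_sub_one_of_pos (by positivity)
    have by1 : Real.log ((x + y) / (2 * y)) ≤ (x + y) / (2 * y) - 1 :=
      Real.log_le_sub_one_of_pos (by positivity)
    have ex : Real.log ((x + y) / (2 * x)) = Real.log (x + y) - Real.log 2 - Real.log x := by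
      rw [Real.log_div (by positivity) (by positivity),
        Real.log_mul (by norm_num) (by positivity)]
      ring
    have ey : Real.log ((x + y) / (2 * y)) = Real.log (x + y) - Real.log 2 - Real.log y := by
      rw [Real.log_div (by positivity) (by positivity),
        Real.log_mul (by norm_num) (by positivity)]
      ring
    rw [ex] at bx; rw [ey] at by1
    have bx' := mul_le_mul_of_nonneg_left bx (le_of_lt hx0')
    have by'' := mul_le_mul_of_nonneg_left by1 (le_of_lt hy0')
    have hxu : x * ((x + y) / (2 * x) - 1) = (x + y) / 2 - x := by field_simp
    have hyu : y * ((x + y) / (2 * y) - 1) = (x + y) / 2 - y := by field_simp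
    rw [hxu] at bx'; rw [hyu] at by''
    linarith [bx', by'']
  -- T2 : s log s - u log u ≤ u * log 2 / 8
  have t2 : (x + y - x * y) * Real.log (x + y - x * y) - (x + y) * Real.log (x + y)
      ≤ (x + y) * Real.log 2 / 8 := by
    have b1 : Real.log ((x + y - x * y) / (x + y)) ≤ (x + y - x * y) / (x + y) - 1 :=
      Real.log_le_sub_one_of_pos (by positivity)
    have e1 : Real.log ((x + y - x * y) / (x + y))
        = Real.log (x + y - x * y) - Real.log (x + y) :=
      Real.log_div (ne_of_gt hs0) (ne_of_gt hu0)
    rw [e1] at b1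
    have b1' := mul_le_mul_of_nonneg_left b1 (le_of_lt hu0)
    have e2 : (x + y) * ((x + y - x * y) / (x + y) - 1) = -(x * y) := by field_simp; ring
    rw [e2] at b1'
    have b2 : Real.log ((x + y) / 2) ≤ Real.log (x + y - x * y) :=
      Real.log_le_log (by positivity) hsu2
    have e3 : Real.log ((x + y) / 2) = Real.log (x + y) - Real.log 2 :=
      Real.log_div (ne_of_gt hu0) (by norm_num)
    rw [e3] at b2
    have b3 : (x + y) * (Real.log 2 - Real.log (x + y)) ≤ Real.log 2 / 2 := by
      have b4 : Real.log (1 / (8 * (x + y))) ≤ 1 / (8 * (x + y)) - 1 :=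
        Real.log_le_sub_one_of_pos (by positivity)
      have e4 : Real.log (1 / (8 * (x + y))) = -(Real.log 8 + Real.log (x + y)) := by
        rw [Real.log_div (by norm_num) (by positivity),
          Real.log_mul (by norm_num) (ne_of_gt hu0)]
        simp
      have e5 : Real.log (8 : ℝ) = 3 * Real.log 2 := by
        rw [show (8 : ℝ) = 2 ^ 3 by norm_num, Real.log_pow]; push_cast; ring
      rw [e4, e5] at b4
      have b5 := mul_le_mul_of_nonneg_left b4 (le_of_lt hu0)
      have e6 : (x + y) * (1 / (8 * (x + y)) - 1) = 1 / 8 - (x + y) := by field_simp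
      rw [e6] at b5
      nlinarith [b5, mul_nonneg (show (0:ℝ) ≤ 4 * Real.log 2 - 1 by linarith)
        (show (0:ℝ) ≤ 1 / 8 - (x + y) by linarith)]
    have hlog2u : 0 ≤ Real.log 2 - Real.log (x + y) := by
      have hl : Real.log (x + y) ≤ (x + y) - 1 := Real.log_le_sub_one_of_pos hu0
      linarith
    have b6 : x * y * (Real.log 2 - Real.log (x + y))
        ≤ (x + y) ^ 2 / 4 * (Real.log 2 - Real.log (x + y)) :=
      mul_le_mul_of_nonneg_right hxyu hlog2u
    have b7 : (x + y) ^ 2 / 4 * (Real.log 2 - Real.log (x + y))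
        ≤ (x + y) / 4 * (Real.log 2 / 2) := by
      have b7' := mul_le_mul_of_nonneg_left b3 (show (0:ℝ) ≤ (x + y) / 4 by positivity)
      linarith [b7']
    -- s log s - u log u = u(log s - log u) - x*y*log s ≤ -(x*y) - x*y*log s
    have b8 := mul_le_mul_of_nonneg_left
      (show - Real.log (x + y - x * y) ≤ Real.log 2 - Real.log (x + y) by linarith [b2])
      (le_of_lt hxy0)
    linarith [b1', b6, b7, b8]
  -- T3 bounds
  have hx1' : x < 1 := by linarith
  have hy1' : y < 1 := by linarith
  have t3x' : - (y * (1 - x) * Real.log (1 - x)) ≤ x * y := by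
    have hw : (0:ℝ) < 1 - x := by linarith
    have hi : Real.log (1 - x)⁻¹ ≤ (1 - x)⁻¹ - 1 :=
      Real.log_le_sub_one_of_pos (inv_pos.2 hw)
    have h2 := mul_le_mul_of_nonneg_left hi hw.le
    have e : (1 - x) * ((1 - x)⁻¹ - 1) = x := by field_simp; ring
    rw [Real.log_inv, e] at h2
    linarith [mul_le_mul_of_nonneg_left h2 hy0]
  have t3y' : - (x * (1 - y) * Real.log (1 - y)) ≤ x * y := by
    have hw : (0:ℝ) < 1 - y := by linarith
    have hi : Real.log (1 - y)⁻¹ ≤ (1 - y)⁻¹ - 1 :=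
      Real.log_le_sub_one_of_pos (inv_pos.2 hw)
    have h2 := mul_le_mul_of_nonneg_left hi hw.le
    have e : (1 - y) * ((1 - y)⁻¹ - 1) = y := by field_simp; ring
    rw [Real.log_inv, e] at h2
    linarith [mul_le_mul_of_nonneg_left h2 hx0]
  have hxy16 : 2 * (x * y) ≤ (x + y) / 16 := by nlinarith [mul_le_mul_of_nonneg_right hx1 hy0, mul_le_mul_of_nonneg_left hy1 hx0]
  -- assemble via the entropy identity
  have hid : Real.log (1 - (x + y - x * y)) = Real.log (1 - x) + Real.log (1 - y) := by
    rw [show (1 : ℝ) - (x + y - x * y) = (1 - x) * (1 - y) by ring]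
    exact Real.log_mul (by linarith) (by linarith)
  rw [binEntropy_form, binEntropy_form, binEntropy_form, hid]
  linarith [t1, t2, t3x', t3y', hxy16]

lemma pairsum {S : Type*} (A : Finset S) (w f : S → ℝ) :
    ∑ c ∈ A, ∑ c' ∈ A, w c * w c' * (f c + f c')
      = 2 * ((∑ c ∈ A, w c * f c) * (∑ c ∈ A, w c)) := by
  have e : ∀ c ∈ A, ∑ c' ∈ A, w c * w c' * (f c + f c')
      = (w c * f c) * (∑ c' ∈ A, w c') + w c * (∑ c' ∈ A, w c' * f c') := by
    intro c _
    rw [Finset.mul_sum, Finset.mul_sum, ← Finset.sum_add_distrib]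
    exact Finset.sum_congr rfl fun c' _ => by ring
  rw [Finset.sum_congr rfl e, Finset.sum_add_distrib, ← Finset.sum_mul, ← Finset.sum_mul]
  ring

set_option maxHeartbeats 1600000 in
theorem stmt5 {S : Type*} [Fintype S] (q p : S → ℝ)
    (hq0 : ∀ c, 0 ≤ q c) (hq1 : ∑ c, q c = 1)
    (hp : ∀ c, p c ∈ Set.Icc (0:ℝ) 1)
    (hmean : ∑ c, q c * p c ≤ 0.01) :
    ∑ c, ∑ c', q c * q c' * binEnt (p c + p c' - p c * p c')
      ≥ 1.26 * ∑ c, q c * binEnt (p c) := by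
  have hL : (0:ℝ) < Real.log 2 := Real.log_pos (by norm_num)
  have hp0 : ∀ c, 0 ≤ p c := fun c => (hp c).1
  have hp1 : ∀ c, p c ≤ 1 := fun c => (hp c).2
  have hz01 : ∀ c c', 0 ≤ p c + p c' - p c * p c' ∧ p c + p c' - p c * p c' ≤ 1 := by
    intro c c'
    constructor <;> nlinarith [hp0 c, hp1 c, hp0 c', hp1 c']
  have hEz0 : ∀ c c', 0 ≤ Real.binEntropy (p c + p c' - p c * p c') := fun c c' =>
    Real.binEntropy_nonneg (hz01 c c').1 (hz01 c c').2
  have hEp0 : ∀ c, 0 ≤ Real.binEntropy (p c) := fun c =>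
    Real.binEntropy_nonneg (hp0 c) (hp1 c)
  classical
  set A : Finset S := Finset.univ.filter (fun c => p c ≤ 1 / 16) with hA
  set B : Finset S := Finset.univ.filter (fun c => ¬ p c ≤ 1 / 16) with hB
  have hsplit : ∀ f : S → ℝ, ∑ c, f c = ∑ c ∈ A, f c + ∑ c ∈ B, f c := fun f =>
    (Finset.sum_filter_add_sum_filter_not Finset.univ (fun c => p c ≤ 1 / 16) f).symm
  have hmemA : ∀ c ∈ A, p c ≤ 1 / 16 := fun c hc => (Finset.mem_filter.1 hc).2
  have hmemB : ∀ c ∈ B, 1 / 16 < p c := fun c hc => lt_of_not_ge (Finset.mem_filter.1 hc).2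
  set a : ℝ := ∑ c ∈ A, q c with ha
  set hA' : ℝ := ∑ c ∈ A, q c * Real.binEntropy (p c) with hhA
  set hB' : ℝ := ∑ c ∈ B, q c * Real.binEntropy (p c) with hhB
  set mA : ℝ := ∑ c ∈ A, q c * p c with hmA
  -- Markov
  have ha84 : (0.84 : ℝ) ≤ a := by
    have h1 : ∑ c ∈ B, q c ≤ ∑ c ∈ B, 16 * (q c * p c) := by
      refine Finset.sum_le_sum fun c hc => ?_
      nlinarith [hq0 c, hmemB c hc]
    have h2 : ∑ c ∈ B, 16 * (q c * p c) = 16 * ∑ c ∈ B, q c * p c := by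
      rw [Finset.mul_sum]
    have h3 : ∑ c ∈ B, q c * p c ≤ ∑ c, q c * p c := by
      refine Finset.sum_le_sum_of_subset_of_nonneg (Finset.subset_univ B) fun c _ _ =>
        mul_nonneg (hq0 c) (hp0 c)
    have h4 := hsplit q
    rw [hq1] at h4
    have ha0' : 0 ≤ ∑ c ∈ A, q c := Finset.sum_nonneg fun c _ => hq0 c
    nlinarith [h1, h3, hmean]
  have ha0 : (0:ℝ) ≤ a := by linarith
  have hA0 : (0:ℝ) ≤ hA' := Finset.sum_nonneg fun c _ => mul_nonneg (hq0 c) (hEp0 c)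
  have hB0 : (0:ℝ) ≤ hB' := Finset.sum_nonneg fun c _ => mul_nonneg (hq0 c) (hEp0 c)
  have hmA0 : (0:ℝ) ≤ mA := Finset.sum_nonneg fun c _ => mul_nonneg (hq0 c) (hp0 c)
  -- chord bound on A
  have hAm : (4 * Real.log 2 + 15 / 16) * mA ≤ hA' := by
    rw [hmA, Finset.mul_sum]
    refine Finset.sum_le_sum fun c hc => ?_
    have := chord16 (p c) (hp0 c) (hmemA c hc)
    calc (4 * Real.log 2 + 15 / 16) * (q c * p c)
        = q c * ((4 * Real.log 2 + 15 / 16) * p c) := by ring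
      _ ≤ q c * Real.binEntropy (p c) := mul_le_mul_of_nonneg_left this (hq0 c)
  -- the binEntropy-version of the statement
  have main : 1.26 * ∑ c, q c * Real.binEntropy (p c)
      ≤ ∑ c, ∑ c', q c * q c' * Real.binEntropy (p c + p c' - p c * p c') := by
    have hRHS : ∑ c, q c * Real.binEntropy (p c) = hA' + hB' := hsplit _
    -- split the double sum
    have hLHS : ∑ c, ∑ c', q c * q c' * Real.binEntropy (p c + p c' - p c * p c')
        = (∑ c ∈ A, ∑ c' ∈ A, q c * q c' * Real.binEntropy (p c + p c' - p c * p c')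
          + ∑ c ∈ A, ∑ c' ∈ B, q c * q c' * Real.binEntropy (p c + p c' - p c * p c'))
          + (∑ c ∈ B, ∑ c' ∈ A, q c * q c' * Real.binEntropy (p c + p c' - p c * p c')
          + ∑ c ∈ B, ∑ c' ∈ B, q c * q c' * Real.binEntropy (p c + p c' - p c * p c')) := by
      rw [hsplit (fun c => ∑ c', q c * q c' * Real.binEntropy (p c + p c' - p c * p c'))]
      rw [Finset.sum_congr rfl (fun c (_ : c ∈ A) => hsplit
        (fun c' => q c * q c' * Real.binEntropy (p c + p c' - p c * p c'))),
        Finset.sum_congr rfl (fun c (_ : c ∈ B) => hsplit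
        (fun c' => q c * q c' * Real.binEntropy (p c + p c' - p c * p c'))),
        Finset.sum_add_distrib, Finset.sum_add_distrib]
    -- AA block
    have bAA : 2 * (hA' * a) - (9 / 8 * Real.log 2 + 1 / 16) * (2 * (mA * a))
        ≤ ∑ c ∈ A, ∑ c' ∈ A, q c * q c' * Real.binEntropy (p c + p c' - p c * p c') := by
      have step : ∑ c ∈ A, ∑ c' ∈ A,
          (q c * q c' * (Real.binEntropy (p c) + Real.binEntropy (p c'))
            - (9 / 8 * Real.log 2 + 1 / 16) * (q c * q c' * (p c + p c')))
          ≤ ∑ c ∈ A, ∑ c' ∈ A, q c * q c' * Real.binEntropy (p c + p c' - p c * p c') := by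
        refine Finset.sum_le_sum fun c hc => Finset.sum_le_sum fun c' hc' => ?_
        have hca := claimA (p c) (p c') (hp0 c) (hmemA c hc) (hp0 c') (hmemA c' hc')
        have hqq : 0 ≤ q c * q c' := mul_nonneg (hq0 c) (hq0 c')
        nlinarith [mul_le_mul_of_nonneg_left hca hqq]
      have ev : ∑ c ∈ A, ∑ c' ∈ A,
          (q c * q c' * (Real.binEntropy (p c) + Real.binEntropy (p c'))
            - (9 / 8 * Real.log 2 + 1 / 16) * (q c * q c' * (p c + p c')))
          = 2 * (hA' * a) - (9 / 8 * Real.log 2 + 1 / 16) * (2 * (mA * a)) := by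
        have e1 : ∀ c ∈ A, ∑ c' ∈ A,
            (q c * q c' * (Real.binEntropy (p c) + Real.binEntropy (p c'))
              - (9 / 8 * Real.log 2 + 1 / 16) * (q c * q c' * (p c + p c')))
            = ∑ c' ∈ A, q c * q c' * (Real.binEntropy (p c) + Real.binEntropy (p c'))
              - (9 / 8 * Real.log 2 + 1 / 16) * ∑ c' ∈ A, q c * q c' * (p c + p c') := by
          intro c _
          rw [Finset.sum_sub_distrib, Finset.mul_sum]
        rw [Finset.sum_congr rfl e1, Finset.sum_sub_distrib, ← Finset.mul_sum,
          pairsum A q (fun c => Real.binEntropy (p c)), pairsum A q p]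
      linarith [step, ev.symm.le, ev.le]
    -- AB block
    have bAB : a * (15 / 16 * hB')
        ≤ ∑ c ∈ A, ∑ c' ∈ B, q c * q c' * Real.binEntropy (p c + p c' - p c * p c') := by
      rw [ha, hhB, Finset.mul_sum]
      have : ∀ c' : S, 15 / 16 * (q c' * Real.binEntropy (p c'))
          = q c' * (15 / 16 * Real.binEntropy (p c')) := fun c' => by ring
      rw [Finset.sum_congr rfl fun c' _ => this c', Finset.sum_mul_sum]
      refine Finset.sum_le_sum fun c hc => Finset.sum_le_sum fun c' hc' => ?_
      have hl := lowerB (p c) (p c') (hp0 c) (hp1 c) (hp0 c') (hp1 c')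
      have h15 : 15 / 16 * Real.binEntropy (p c')
          ≤ Real.binEntropy (p c + p c' - p c * p c') := by
        have h1x : (15 / 16 : ℝ) ≤ 1 - p c := by linarith [hmemA c hc]
        nlinarith [hEp0 c', hl]
      have hqq : 0 ≤ q c * q c' := mul_nonneg (hq0 c) (hq0 c')
      calc q c * (q c' * (15 / 16 * Real.binEntropy (p c')))
          = (q c * q c') * (15 / 16 * Real.binEntropy (p c')) := by ring
        _ ≤ (q c * q c') * Real.binEntropy (p c + p c' - p c * p c') :=
            mul_le_mul_of_nonneg_left h15 hqq
    -- BA block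
    have bBA : (15 / 16 * hB') * a
        ≤ ∑ c ∈ B, ∑ c' ∈ A, q c * q c' * Real.binEntropy (p c + p c' - p c * p c') := by
      have e0 : 15 / 16 * hB' = ∑ c ∈ B, q c * (15 / 16 * Real.binEntropy (p c)) := by
        rw [hhB, Finset.mul_sum]
        exact Finset.sum_congr rfl fun c _ => by ring
      rw [e0, ha, Finset.sum_mul_sum]
      refine Finset.sum_le_sum fun c hc => Finset.sum_le_sum fun c' hc' => ?_
      have hl := lowerB (p c') (p c) (hp0 c') (hp1 c') (hp0 c) (hp1 c)
      have h15 : 15 / 16 * Real.binEntropy (p c)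
          ≤ Real.binEntropy (p c + p c' - p c * p c') := by
        have h1x : (15 / 16 : ℝ) ≤ 1 - p c' := by linarith [hmemA c' hc']
        have e : p c' + p c - p c' * p c = p c + p c' - p c * p c' := by ring
        rw [e] at hl
        nlinarith [hEp0 c, hl]
      have hqq : 0 ≤ q c * q c' := mul_nonneg (hq0 c) (hq0 c')
      calc (q c * (15 / 16 * Real.binEntropy (p c))) * q c'
          = (q c * q c') * (15 / 16 * Real.binEntropy (p c)) := by ring
        _ ≤ (q c * q c') * Real.binEntropy (p c + p c' - p c * p c') :=
            mul_le_mul_of_nonneg_left h15 hqq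
    -- BB block
    have bBB : (0:ℝ)
        ≤ ∑ c ∈ B, ∑ c' ∈ B, q c * q c' * Real.binEntropy (p c + p c' - p c * p c') :=
      Finset.sum_nonneg fun c _ => Finset.sum_nonneg fun c' _ =>
        mul_nonneg (mul_nonneg (hq0 c) (hq0 c')) (hEz0 c c')
    -- final arithmetic
    rw [hRHS, hLHS]
    have hK4 : 9 / 8 * Real.log 2 + 1 / 16 ≤ (4 * Real.log 2 + 15 / 16) / 4 := by
      have := Real.log_two_lt_d9
      linarith
    have hKmA : (9 / 8 * Real.log 2 + 1 / 16) * mA ≤ hA' / 4 := by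
      have h2 := mul_le_mul_of_nonneg_right hK4 hmA0
      linarith [hAm]
    have h3 := mul_le_mul_of_nonneg_right hKmA ha0
    nlinarith [bAA, bAB, bBA, bBB, h3, mul_nonneg hA0 (show (0:ℝ) ≤ a - 0.84 by linarith),
      mul_nonneg hB0 (show (0:ℝ) ≤ a - 0.84 by linarith)]
  -- convert binEnt to binEntropy
  simp only [binEnt_eq, ← mul_div_assoc, ← Finset.sum_div]
  rw [ge_iff_le]
  gcongr
end

section
/- Let S be a finite set, q a probability distribution on S, p : S → [0,1] with Σ_c q(c)·p(c) ≤ 0.01, and let C₀ = {c : p(c) ≤ 0.1}. Then Σ_{c,c' ∈ C₀} q(c)·q(c')·H(p(c) + p(c') - p(c)·p(c')) ≥ 1.26 · Σ_{c ∈ C₀} q(c)·H(p(c)). -/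
open Finset

attribute [local instance] Classical.propDecidable

/-- Two-point log-sum bound: `-x log x - y log y ≤ -s log s + s log 2`. -/
lemma two_point_aux {x y : ℝ} (hx : 0 ≤ x) (hy : 0 ≤ y) :
    -x * Real.log x - y * Real.log y ≤ -(x+y) * Real.log (x+y) + (x+y) * Real.log 2 := by
  have key : ∀ a : ℝ, 0 ≤ a → a ≤ x + y →
      a * Real.log (x+y) - a * Real.log 2 - a * Real.log a ≤ (x+y)/2 - a := by
    intro a ha has
    rcases eq_or_lt_of_le ha with h | h
    · rw [← h]
      have hs2 : (0:ℝ) ≤ (x+y)/2 := by positivity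
      simpa using hs2
    · have hs : 0 < x + y := lt_of_lt_of_le h has
      have h1 : Real.log ((x+y) / (2*a)) ≤ (x+y)/(2*a) - 1 :=
        Real.log_le_sub_one_of_pos (by positivity)
      have h2 : Real.log ((x+y) / (2*a)) = Real.log (x+y) - Real.log 2 - Real.log a := by
        rw [show (x+y) / (2*a) = (x+y) / 2 / a by ring, Real.log_div (by positivity) (ne_of_gt h),
          Real.log_div (by positivity) (by norm_num)]
      have h3 : a * Real.log ((x+y) / (2*a)) ≤ a * ((x+y)/(2*a) - 1) :=
        mul_le_mul_of_nonneg_left h1 ha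
      rw [h2] at h3
      have h4 : a * ((x+y)/(2*a) - 1) = (x+y)/2 - a := by field_simp
      nlinarith [h3]
  have kx := key x hx (by linarith)
  have ky := key y hy (by linarith)
  have h4 : (x+y) * Real.log (x+y) = x * Real.log (x+y) + y * Real.log (x+y) := by ring
  nlinarith [kx, ky, h4]

set_option maxHeartbeats 1000000 in
/-- Core pointwise inequality in natural-log form. -/
lemma core_ln {x y : ℝ} (hx0 : 0 ≤ x) (hx1 : x ≤ 0.1) (hy0 : 0 ≤ y) (hy1 : y ≤ 0.1) :
    0.7 * ((-x * Real.log x - (1-x) * Real.log (1-x)) +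
           (-y * Real.log y - (1-y) * Real.log (1-y)))
      ≤ -(x+y-x*y) * Real.log (x+y-x*y)
        - (1-(x+y-x*y)) * Real.log (1-(x+y-x*y)) := by
  rcases eq_or_lt_of_le (by positivity : (0:ℝ) ≤ x + y) with hs0 | hs
  · -- x = y = 0
    have hx' : x = 0 := by linarith
    have hy' : y = 0 := by linarith
    subst hx'; subst hy'
    simp
  · have h1x : (0:ℝ) < 1 - x := by linarith
    have h1y : (0:ℝ) < 1 - y := by linarith
    -- rewrite the (1-z) term
    have hrw : (1:ℝ) - (x+y-x*y) = (1-x)*(1-y) := by ring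
    rw [hrw, Real.log_mul (ne_of_gt h1x) (ne_of_gt h1y)]
    -- abbreviations as facts
    have hzpos : 0 < x + y - x*y := by
      nlinarith [mul_nonneg hx0 (show (0:ℝ) ≤ 0.1 - y by linarith)]
    have hzle : x + y - x*y ≤ x + y := by nlinarith [mul_nonneg hx0 hy0]
    have hlogz : Real.log (x+y-x*y) ≤ Real.log (x+y) := Real.log_le_log hzpos hzle
    have hA0 : 0 ≤ -Real.log (x+y) := by
      have := Real.log_nonpos (by positivity) (show x + y ≤ 1 by linarith)
      linarith
    have hzlb : x + y - (x+y)^2/4 ≤ x + y - x*y := by nlinarith [sq_nonneg (x-y)]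
    -- lower bound on -z log z
    have hP : (x+y-(x+y)^2/4) * (-Real.log (x+y)) ≤ -(x+y-x*y) * Real.log (x+y-x*y) := by
      have m1 : (x+y-x*y) * Real.log (x+y-x*y) ≤ (x+y-x*y) * Real.log (x+y) :=
        mul_le_mul_of_nonneg_left hlogz hzpos.le
      have m2 : (x+y-(x+y)^2/4) * (-Real.log (x+y)) ≤ (x+y-x*y) * (-Real.log (x+y)) :=
        mul_le_mul_of_nonneg_right hzlb hA0
      nlinarith [m1, m2]
    -- -log(x+y) ≥ 2 log 2
    have hA2 : 2 * Real.log 2 ≤ -Real.log (x+y) := by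
      have h1 : Real.log (x+y) ≤ Real.log (1/4) := Real.log_le_log hs (by linarith)
      have h2 : Real.log ((1:ℝ)/4) = -(2 * Real.log 2) := by
        rw [show (1/4:ℝ) = ((2:ℝ)^2)⁻¹ by norm_num, Real.log_inv, Real.log_pow]
        push_cast; ring
      linarith
    -- the numeric inequality
    have hlog2 : (0:ℝ) < Real.log 2 := Real.log_pos (by norm_num)
    have hlog2u : Real.log 2 < 0.6931471808 := Real.log_two_lt_d9
    have hnum : 0.7 * ((x+y) * (-Real.log (x+y)) + (x+y) * Real.log 2)
        ≤ (x+y-(x+y)^2/4) * (-Real.log (x+y)) + 0.18 * (x+y) := by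
      nlinarith [mul_nonneg (mul_nonneg hs.le hA0)
          (show (0:ℝ) ≤ 0.05 - (x+y)/4 by linarith),
        mul_nonneg hs.le (show (0:ℝ) ≤ -Real.log (x+y) - 2 * Real.log 2 by linarith),
        mul_nonneg hs.le (show (0:ℝ) ≤ 0.18 - 0.2 * Real.log 2 by linarith)] 
    -- two-point bound, rephrased
    have htp : 0.7 * (x * Real.log x + y * Real.log y)
        ≥ 0.7 * (-((x+y) * (-Real.log (x+y))) - (x+y) * Real.log 2) := by
      have := two_point_aux hx0 hy0
      linarith [this]
    -- bounds on the (1-x),(1-y) entropy terms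
    have hbound : ∀ u v : ℝ, 0 ≤ u → u ≤ 0.1 → 0 ≤ v → v ≤ 0.1 →
        0.7 * ((1-u) * (-Real.log (1-u))) + 0.18 * u
          ≤ (1-u) * (1-v) * (-Real.log (1-u)) := by
      intro u v hu0 hu1 hv0 hv1
      have h1u : (0:ℝ) < 1 - u := by linarith
      have ha0 : 0 ≤ -Real.log (1-u) := by
        have := Real.log_nonpos (by linarith) (show (1:ℝ)-u ≤ 1 by linarith)
        linarith
      have hau : u ≤ -Real.log (1-u) := by
        have := Real.log_le_sub_one_of_pos h1u
        linarith
      have hkey : 0.9 * u ≤ (1-u) * (-Real.log (1-u)) := by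
        linarith [mul_nonneg h1u.le (sub_nonneg.2 hau),
          mul_nonneg hu0 (show (0:ℝ) ≤ 0.1 - u by linarith)]
      linarith [mul_le_mul_of_nonneg_right hkey (show (0:ℝ) ≤ 0.3 - v by linarith),
        mul_nonneg hu0 (show (0:ℝ) ≤ 0.1 - v by linarith)]
    have h5x := hbound x y hx0 hx1 hy0 hy1
    have h5y := hbound y x hy0 hy1 hx0 hx1
    linarith [hP, hnum, htp, h5x, h5y]

lemma binEnt_eq_s7 (t : ℝ) :
    binEnt t = (-t * Real.log t - (1-t) * Real.log (1-t)) / Real.log 2 := by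
  unfold binEnt Real.logb
  ring

/-- Gilmer's pointwise Lemma: for `x, y ∈ [0, 0.1]`,
`0.7 (H(x) + H(y)) ≤ H(x + y - xy)`. -/
lemma core_binEnt {x y : ℝ} (hx0 : 0 ≤ x) (hx1 : x ≤ 0.1) (hy0 : 0 ≤ y) (hy1 : y ≤ 0.1) :
    0.7 * (binEnt x + binEnt y) ≤ binEnt (x + y - x*y) := by
  have hL : (0:ℝ) < Real.log 2 := Real.log_pos (by norm_num)
  have h := core_ln hx0 hx1 hy0 hy1
  rw [binEnt_eq_s7, binEnt_eq_s7, binEnt_eq_s7, ← sub_nonneg]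
  have : (-(x+y-x*y) * Real.log (x+y-x*y) - (1-(x+y-x*y)) * Real.log (1-(x+y-x*y))) / Real.log 2
      - 0.7 * ((-x * Real.log x - (1-x) * Real.log (1-x)) / Real.log 2
        + (-y * Real.log y - (1-y) * Real.log (1-y)) / Real.log 2)
      = ((-(x+y-x*y) * Real.log (x+y-x*y) - (1-(x+y-x*y)) * Real.log (1-(x+y-x*y)))
        - 0.7 * ((-x * Real.log x - (1-x) * Real.log (1-x))
          + (-y * Real.log y - (1-y) * Real.log (1-y)))) / Real.log 2 := by
    ring
  rw [this]
  exact div_nonneg (by linarith) hL.le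

lemma binEnt_nonneg {t : ℝ} (h0 : 0 ≤ t) (h1 : t ≤ 1) : 0 ≤ binEnt t := by
  have h1' : Real.logb 2 t ≤ 0 := Real.logb_nonpos (by norm_num) h0 h1
  have h2' : Real.logb 2 (1-t) ≤ 0 := Real.logb_nonpos (by norm_num) (by linarith) (by linarith)
  have := mul_nonneg h0 (neg_nonneg.2 h1')
  have := mul_nonneg (show (0:ℝ) ≤ 1 - t by linarith) (neg_nonneg.2 h2')
  unfold binEnt
  nlinarith

theorem stmt7 {S : Type*} [Fintype S] (q p : S → ℝ)
    (hq0 : ∀ c, 0 ≤ q c) (hq1 : ∑ c, q c = 1)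
    (hp : ∀ c, p c ∈ Set.Icc (0:ℝ) 1)
    (hmean : ∑ c, q c * p c ≤ 0.01) :
    ∑ c ∈ Finset.univ.filter (fun c => p c ≤ 0.1),
      ∑ c' ∈ Finset.univ.filter (fun c => p c ≤ 0.1),
        q c * q c' * binEnt (p c + p c' - p c * p c')
      ≥ 1.26 * ∑ c ∈ Finset.univ.filter (fun c => p c ≤ 0.1), q c * binEnt (p c) := by
  classical
  set C : Finset S := Finset.univ.filter (fun c => p c ≤ 0.1) with hC
  set T : ℝ := ∑ c ∈ C, q c * binEnt (p c) with hT
  set Q : ℝ := ∑ c ∈ C, q c with hQ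
  have hmemC : ∀ c ∈ C, p c ≤ 0.1 := by
    intro c hc
    exact (Finset.mem_filter.1 hc).2
  have hTnn : 0 ≤ T := by
    apply Finset.sum_nonneg
    intro c hc
    exact mul_nonneg (hq0 c) (binEnt_nonneg (hp c).1 (hp c).2)
  have hQnn : 0 ≤ Q := Finset.sum_nonneg fun c _ => hq0 c
  have hQ9 : 0.9 ≤ Q := by
    have hsplit : Q + ∑ c ∈ Finset.univ.filter (fun c => ¬ p c ≤ 0.1), q c = 1 := by
      rw [hQ, hC, Finset.sum_filter_add_sum_filter_not, hq1]
    have hcomp : ∑ c ∈ Finset.univ.filter (fun c => ¬ p c ≤ 0.1), q c ≤ 0.1 := by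
      have h1 : ∑ c ∈ Finset.univ.filter (fun c => ¬ p c ≤ 0.1), q c
          ≤ ∑ c ∈ Finset.univ.filter (fun c => ¬ p c ≤ 0.1), 10 * (q c * p c) := by
        apply Finset.sum_le_sum
        intro c hc
        have hpc : 0.1 < p c := lt_of_not_ge (Finset.mem_filter.1 hc).2
        nlinarith [hq0 c]
      have h2 : ∑ c ∈ Finset.univ.filter (fun c => ¬ p c ≤ 0.1), 10 * (q c * p c)
          ≤ ∑ c : S, 10 * (q c * p c) := by
        apply Finset.sum_le_sum_of_subset_of_nonneg (Finset.filter_subset _ _)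
        intro c _ _
        have := mul_nonneg (hq0 c) (hp c).1
        linarith
      have h3 : ∑ c : S, 10 * (q c * p c) = 10 * ∑ c : S, q c * p c := by
        rw [Finset.mul_sum]
      linarith [h1, h2, h3.le, h3.ge, mul_le_mul_of_nonneg_left hmean (show (0:ℝ) ≤ 10 by norm_num)]
    linarith
  have hstep : ∑ c ∈ C, ∑ c' ∈ C, q c * q c' * binEnt (p c + p c' - p c * p c')
      ≥ ∑ c ∈ C, ∑ c' ∈ C, q c * q c' * (0.7 * (binEnt (p c) + binEnt (p c'))) := by
    apply Finset.sum_le_sum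
    intro c hc
    apply Finset.sum_le_sum
    intro c' hc'
    apply mul_le_mul_of_nonneg_left
    · exact core_binEnt (hp c).1 (hmemC c hc) (hp c').1 (hmemC c' hc')
    · exact mul_nonneg (hq0 c) (hq0 c')
  have hcalc : ∑ c ∈ C, ∑ c' ∈ C, q c * q c' * (0.7 * (binEnt (p c) + binEnt (p c')))
      = 0.7 * (Q * T + T * Q) := by
    have inner : ∀ c, ∑ c' ∈ C, q c * q c' * (0.7 * (binEnt (p c) + binEnt (p c')))
        = 0.7 * (q c * binEnt (p c) * Q + q c * T) := by
      intro c
      rw [hQ, hT, Finset.mul_sum, Finset.mul_sum, ← Finset.sum_add_distrib, Finset.mul_sum]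
      apply Finset.sum_congr rfl
      intro c' _
      ring
    have houter : ∑ c ∈ C, ∑ c' ∈ C, q c * q c' * (0.7 * (binEnt (p c) + binEnt (p c')))
        = ∑ c ∈ C, 0.7 * (q c * binEnt (p c) * Q + q c * T) :=
      Finset.sum_congr rfl fun c _ => inner c
    rw [houter, ← Finset.mul_sum, Finset.sum_add_distrib, ← Finset.sum_mul, ← Finset.sum_mul,
      ← hT, ← hQ]
    ring
  have : 0.7 * (Q * T + T * Q) ≥ 1.26 * T := by nlinarith [hTnn, hQ9]
  linarith [hstep, hcalc.ge, hcalc.le, this]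
end

section
/- Let F be a union-closed family of subsets of {1,…,n} with F ≠ {∅} (F nonempty and closed under pairwise unions). Then there exists i ∈ {1,…,n} such that the number of sets in F containing i is at least 0.01·|F|. -/
open Real Finset

set_option maxHeartbeats 2000000

lemma chordA {x y : ℝ} (hx0 : 0 ≤ x) (hx1 : x ≤ 1) (hy0 : 0 ≤ y) :
    (1 - x) * negMulLog y ≤ negMulLog (x + y - x*y) := by
  have h := concaveOn_negMulLog.2 (Set.mem_Ici.2 hy0) (Set.mem_Ici.2 (zero_le_one)) (by linarith : (0:ℝ) ≤ 1 - x) hx0 (by ring)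
  have e : (1-x) • y + x • (1:ℝ) = x + y - x*y := by simp; ring
  rw [e] at h
  simpa [negMulLog_one] using h

lemma lemS {x y : ℝ} (hx0 : 0 ≤ x) (hx1 : x ≤ 1) (hy0 : 0 ≤ y) (hy1 : y ≤ 1) :
    (0.52 - y) * negMulLog x + (0.52 - x) * negMulLog y ≤ negMulLog (x + y - x*y) := by
  have hφx : 0 ≤ negMulLog x := negMulLog_nonneg hx0 hx1
  have hφy : 0 ≤ negMulLog y := negMulLog_nonneg hy0 hy1
  rcases le_or_gt 0.52 y with hy52 | hy52
  · -- case A: y large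
    have c2 : (1 - x) * negMulLog y ≤ negMulLog (x + y - x*y) := chordA hx0 hx1 hy0
    nlinarith [mul_nonneg (sub_nonneg.2 hy52) hφx]
  rcases le_or_gt 0.52 x with hx52 | hx52
  · -- case A': x large
    have c1 : (1 - y) * negMulLog x ≤ negMulLog (y + x - y*x) := chordA hy0 hy1 hx0
    rw [show y + x - y*x = x + y - x*y by ring] at c1
    nlinarith [mul_nonneg (sub_nonneg.2 hx52) hφy]
  rcases le_or_gt 0.04 (0.52*(x+y) - x*y) with hreg | hreg
  · -- case B: two chords, convex combination
    have c1 : (1 - y) * negMulLog x ≤ negMulLog (y + x - y*x) := chordA hy0 hy1 hx0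
    rw [show y + x - y*x = x + y - x*y by ring] at c1
    have c2 : (1 - x) * negMulLog y ≤ negMulLog (x + y - x*y) := chordA hx0 hx1 hy0
    have h52y : (0:ℝ) ≤ 0.52 - y := by linarith
    have hy1' : (0:ℝ) < 1 - y := by linarith
    -- (1-y) * goal: (0.52-y)*(1-y)*φx + (0.52-x)*(1-y)*φy ≤ (1-y)*φu
    have key : (0.52 - x)*(1-y) ≤ 0.48*(1-x) := by nlinarith
    have := mul_le_mul_of_nonneg_left c1 h52y
    have := mul_le_mul_of_nonneg_left c2 (by norm_num : (0:ℝ) ≤ 0.48)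
    have := mul_le_mul_of_nonneg_right key hφy
    have goal' : (1-y) * ((0.52 - y) * negMulLog x + (0.52 - x) * negMulLog y)
        ≤ (1-y) * negMulLog (x + y - x*y) := by nlinarith
    exact le_of_mul_le_mul_left (by linarith [goal']) hy1'
  · -- case C: x+y small
    rcases eq_or_lt_of_le hx0 with hx0' | hx0'
    · rw [← hx0']; simp [negMulLog_zero]; nlinarith
    rcases eq_or_lt_of_le hy0 with hy0' | hy0'
    · rw [← hy0']; simp [negMulLog_zero]; nlinarith
    have hs0 : 0 < x + y := by positivity
    have hs08 : x + y ≤ 0.08 := by nlinarith [sq_nonneg (x - y)]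
    have hxy : x*y ≤ 0.02 * (x+y) := by
      nlinarith [sq_nonneg (x - y), mul_le_mul_of_nonneg_left hs08 hs0.le]
    have hL2 : 2 ≤ -log (x+y) := by
      have : log (x+y) ≤ -2 := by
        rw [show (-2:ℝ) = log (exp (-2)) by rw [Real.log_exp]]
        apply Real.log_le_log hs0
        have h1 : Real.exp 1 < 2.7182818286 := Real.exp_one_lt_d9
        have h2 : Real.exp 2 = Real.exp 1 * Real.exp 1 := by
          rw [← Real.exp_add]; norm_num
        have h3 : Real.exp 2 < 12.5 := by nlinarith [Real.exp_pos 1]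
        have h4 : Real.exp (-2) = (Real.exp 2)⁻¹ := by
          rw [← Real.exp_neg]
        rw [h4, inv_eq_one_div, le_div_iff₀ (Real.exp_pos 2)]
        nlinarith [Real.exp_pos 2]
      linarith
    have hA1 : negMulLog x ≤ -x * log (x+y) + (x+y) - x := by
      have hw : (0:ℝ) < (x+y) / x := by positivity
      have h1 : log ((x+y)/x) ≤ (x+y)/x - 1 := Real.log_le_sub_one_of_pos hw
      have h2 : log ((x+y)/x) = log (x+y) - log x := Real.log_div (by positivity) (ne_of_gt hx0')
      have h3 : x * (log (x+y) - log x) ≤ x * ((x+y)/x - 1) := by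
        rw [← h2]; exact mul_le_mul_of_nonneg_left h1 hx0
      have h5 : x * ((x+y)/x - 1) = (x+y) - x := by
        rw [mul_sub, mul_div_cancel₀ _ (ne_of_gt hx0')]; ring
      have h3' := h3
      rw [mul_sub, h5] at h3'
      simp only [negMulLog]; linarith
    have hA2 : negMulLog y ≤ -y * log (x+y) + (x+y) - y := by
      have hw : (0:ℝ) < (x+y) / y := by positivity
      have h1 : log ((x+y)/y) ≤ (x+y)/y - 1 := Real.log_le_sub_one_of_pos hw
      have h2 : log ((x+y)/y) = log (x+y) - log y := Real.log_div (by positivity) (ne_of_gt hy0')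
      have h3 : y * (log (x+y) - log y) ≤ y * ((x+y)/y - 1) := by
        rw [← h2]; exact mul_le_mul_of_nonneg_left h1 hy0
      have h5 : y * ((x+y)/y - 1) = (x+y) - y := by
        rw [mul_sub, mul_div_cancel₀ _ (ne_of_gt hy0')]; ring
      have h3' := h3
      rw [mul_sub, h5] at h3'
      simp only [negMulLog]; linarith
    have hu0 : 0 < x + y - x*y := by nlinarith
    have hus : x + y - x*y ≤ x + y := by nlinarith
    have hB : (x + y - x*y) * (-log (x+y)) ≤ negMulLog (x + y - x*y) := by
      have h1 : log (x + y - x*y) ≤ log (x+y) := Real.log_le_log hu0 hus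
      have h2 := mul_le_mul_of_nonneg_left h1 hu0.le
      simp only [negMulLog]; linarith [h2]
    -- final combination
    have hL0 : (0:ℝ) ≤ -log (x+y) := by linarith
    have hLHS1 : (0.52 - y) * negMulLog x + (0.52 - x) * negMulLog y
        ≤ 0.52 * (negMulLog x + negMulLog y) := by
      nlinarith [mul_nonneg hy0 hφx, mul_nonneg hx0 hφy]
    have hsum : negMulLog x + negMulLog y ≤ (x+y) * (-log (x+y)) + (x+y) := by
      have h5 : -x * log (x+y) + -y * log (x+y) = (x+y) * (-log (x+y)) := by ring
      linarith
    have hLHS : (0.52 - y) * negMulLog x + (0.52 - x) * negMulLog y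
        ≤ 0.52 * ((x+y) * (-log (x+y)) + (x+y)) := by
      have := mul_le_mul_of_nonneg_left hsum (by norm_num : (0:ℝ) ≤ 0.52)
      linarith
    have hRHS1 : 0.98 * (x+y) * (-log (x+y)) ≤ (x + y - x*y) * (-log (x+y)) := by
      apply mul_le_mul_of_nonneg_right _ hL0
      linarith
    have hfin : 0.52 * ((x+y) * (-log (x+y)) + (x+y)) ≤ 0.98 * (x+y) * (-log (x+y)) := by
      nlinarith [mul_nonneg hs0.le (sub_nonneg.2 hL2), mul_nonneg hs0.le hL0]
    linarith



lemma keyIneq {x y : ℝ} (hx0 : 0 ≤ x) (hx1 : x ≤ 1) (hy0 : 0 ≤ y) (hy1 : y ≤ 1) :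
    0.52 * (binEntropy x + binEntropy y) - (x * binEntropy y + y * binEntropy x)
      ≤ binEntropy (x + y - x*y) := by
  have hS := lemS hx0 hx1 hy0 hy1
  have e1 := binEntropy_eq_negMulLog_add_negMulLog_one_sub x
  have e2 := binEntropy_eq_negMulLog_add_negMulLog_one_sub y
  have e3 := binEntropy_eq_negMulLog_add_negMulLog_one_sub (x + y - x*y)
  have e4 : (1:ℝ) - (x + y - x*y) = (1-x)*(1-y) := by ring
  rw [e4] at e3
  have e5 := negMulLog_mul (1-x) (1-y)
  have n1 : 0 ≤ negMulLog (1-x) := negMulLog_nonneg (by linarith) (by linarith)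
  have n2 : 0 ≤ negMulLog (1-y) := negMulLog_nonneg (by linarith) (by linarith)
  have n3 : 0 ≤ negMulLog x := negMulLog_nonneg hx0 hx1
  have n4 : 0 ≤ negMulLog y := negMulLog_nonneg hy0 hy1
  rw [e1, e2, e3, e5]
  nlinarith [mul_nonneg hx0 n2, mul_nonneg hy0 n1]

lemma jensen_binEntropy {β : Type*} (t : Finset β) (c x : β → ℝ)
    (hc : ∀ i ∈ t, 0 ≤ c i) (hx0 : ∀ i ∈ t, 0 ≤ x i) (hx1 : ∀ i ∈ t, x i ≤ 1) :
    ∑ i ∈ t, c i * binEntropy (x i)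
      ≤ (∑ i ∈ t, c i) * binEntropy ((∑ i ∈ t, c i * x i) / (∑ i ∈ t, c i)) := by
  rcases eq_or_lt_of_le (Finset.sum_nonneg hc) with hC | hC
  · have hz : ∀ i ∈ t, c i = 0 := by
      intro i hi
      exact (Finset.sum_eq_zero_iff_of_nonneg hc).1 hC.symm i hi
    have hL : ∑ i ∈ t, c i * binEntropy (x i) = 0 :=
      Finset.sum_eq_zero fun i hi => by rw [hz i hi, zero_mul]
    rw [hL, ← hC, zero_mul]
  · set C := ∑ i ∈ t, c i with hCdef
    have h := (strictConcave_binEntropy.concaveOn).le_map_sum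
      (t := t) (w := fun i => c i / C) (p := x)
      (fun i hi => div_nonneg (hc i hi) hC.le)
      (by rw [← Finset.sum_div, div_self (ne_of_gt hC)])
      (fun i hi => Set.mem_Icc.2 ⟨hx0 i hi, hx1 i hi⟩)
    simp only [smul_eq_mul] at h
    have e1 : ∑ i ∈ t, c i / C * x i = (∑ i ∈ t, c i * x i) / C := by
      rw [Finset.sum_div]
      exact Finset.sum_congr rfl fun i _ => by ring
    rw [e1] at h
    have h2 := mul_le_mul_of_nonneg_left h hC.le
    calc ∑ i ∈ t, c i * binEntropy (x i)
        = C * ∑ i ∈ t, c i / C * binEntropy (x i) := by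
          rw [Finset.mul_sum]
          exact Finset.sum_congr rfl fun i _ => by field_simp
      _ ≤ C * binEntropy ((∑ i ∈ t, c i * x i) / C) := h2

lemma maxent {β : Type*} (G : Finset β) (q : β → ℝ)
    (h0 : ∀ x ∈ G, 0 ≤ q x) (h1 : ∑ x ∈ G, q x = 1) :
    ∑ x ∈ G, negMulLog (q x) ≤ Real.log G.card := by
  have hne : G.Nonempty := by
    rcases G.eq_empty_or_nonempty with h | h
    · exfalso; rw [h] at h1; simp at h1
    · exact h
  have hn : (0:ℝ) < G.card := by exact_mod_cast Finset.card_pos.2 hne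
  have h := concaveOn_negMulLog.le_map_sum (t := G) (w := fun _ => (G.card : ℝ)⁻¹) (p := q)
    (fun i _ => by positivity)
    (by rw [Finset.sum_const, nsmul_eq_mul, mul_inv_cancel₀ (ne_of_gt hn)])
    (fun i hi => Set.mem_Ici.2 (h0 i hi))
  simp only [smul_eq_mul] at h
  have e1 : ∑ i ∈ G, (G.card : ℝ)⁻¹ * q i = (G.card : ℝ)⁻¹ := by
    rw [← Finset.mul_sum, h1, mul_one]
  rw [e1] at h
  have e2 : negMulLog (G.card : ℝ)⁻¹ = (G.card : ℝ)⁻¹ * Real.log G.card := by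
    rw [negMulLog, Real.log_inv]; ring
  rw [e2, ← Finset.mul_sum] at h
  have := mul_le_mul_of_nonneg_left h hn.le
  rw [← mul_assoc, ← mul_assoc, mul_inv_cancel₀ (ne_of_gt hn), one_mul, one_mul] at this
  exact this

lemma nml_pair {a b : ℝ} (ha : 0 ≤ a) (hb : 0 ≤ b) :
    negMulLog a + negMulLog b = negMulLog (a+b) + (a+b) * binEntropy (b/(a+b)) := by
  rcases eq_or_lt_of_le (by linarith : (0:ℝ) ≤ a + b) with h | h
  · have ha0 : a = 0 := by linarith
    have hb0 : b = 0 := by linarith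
    simp [ha0, hb0]
  · have hne : a + b ≠ 0 := ne_of_gt h
    have e0 : (1:ℝ) - b/(a+b) = a/(a+b) := by field_simp; ring
    rw [binEntropy_eq_negMulLog_add_negMulLog_one_sub, e0]
    have e1 := negMulLog_mul (a+b) (b/(a+b))
    have e2 := negMulLog_mul (a+b) (a/(a+b))
    rw [mul_div_cancel₀ _ hne] at e1 e2
    have : (a+b) * (negMulLog (b/(a+b)) + negMulLog (a/(a+b)))
        = negMulLog b + negMulLog a - negMulLog (a+b) := by
      have hsum : b/(a+b) + a/(a+b) = 1 := by field_simp; ring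
      have h3 : (b/(a+b)) * negMulLog (a+b) + (a/(a+b)) * negMulLog (a+b)
          = negMulLog (a+b) := by rw [← add_mul, hsum, one_mul]
      rw [mul_add]
      linarith [e1, e2, h3]
    linarith [this]

-- pointwise or
def orf {n : ℕ} (f g : Fin n → Bool) : Fin n → Bool := fun i => f i || g i

lemma orf_cons {n : ℕ} (b₁ b₂ : Bool) (s₁ s₂ : Fin n → Bool) :
    orf (Fin.cons b₁ s₁) (Fin.cons b₂ s₂) = Fin.cons (b₁ || b₂) (orf s₁ s₂) := by
  funext i
  refine Fin.cases ?_ (fun j => ?_) i <;> simp [orf]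

noncomputable def uconv {n : ℕ} (w : (Fin n → Bool) → ℝ) (T : Fin n → Bool) : ℝ :=
  ∑ f : Fin n → Bool, ∑ g : Fin n → Bool, if orf f g = T then w f * w g else 0

lemma uconv_nonneg {n : ℕ} (w : (Fin n → Bool) → ℝ) (hw : ∀ f, 0 ≤ w f) (T : Fin n → Bool) :
    0 ≤ uconv w T := by
  apply Finset.sum_nonneg
  intro f _
  apply Finset.sum_nonneg
  intro g _
  split
  · exact mul_nonneg (hw f) (hw g)
  · exact le_refl 0

-- reindexing a sum over (Fin (n+1) → Bool)
lemma sum_cons {n : ℕ} (F : (Fin (n+1) → Bool) → ℝ) :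
    ∑ f, F f = ∑ s : Fin n → Bool, (F (Fin.cons false s) + F (Fin.cons true s)) := by
  have h := Fintype.sum_equiv (Fin.consEquiv (fun _ : Fin (n+1) => Bool))
    (fun p : Bool × (Fin n → Bool) => F (Fin.cons p.1 p.2)) F (fun p => rfl)
  rw [← h, Fintype.sum_prod_type, Fintype.sum_bool]
  rw [← Finset.sum_add_distrib]
  apply Finset.sum_congr rfl
  intro s _
  ring







lemma sum_cons2 {n : ℕ} (F : (Fin (n+1) → Bool) → (Fin (n+1) → Bool) → ℝ) :
    (∑ f, ∑ g, F f g) = ∑ s₁ : Fin n → Bool, ∑ s₂ : Fin n → Bool,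
      (F (Fin.cons false s₁) (Fin.cons false s₂) + F (Fin.cons false s₁) (Fin.cons true s₂)
       + F (Fin.cons true s₁) (Fin.cons false s₂) + F (Fin.cons true s₁) (Fin.cons true s₂)) := by
  rw [sum_cons (fun f => ∑ g, F f g)]
  apply Finset.sum_congr rfl
  intro s₁ _
  rw [sum_cons (F (Fin.cons false s₁)), sum_cons (F (Fin.cons true s₁)), ← Finset.sum_add_distrib]
  apply Finset.sum_congr rfl
  intro s₂ _
  ring

theorem gilmer_ind : ∀ (n : ℕ) (w : (Fin n → Bool) → ℝ),
    (∀ f, 0 ≤ w f) → (∑ f, w f = 1) →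
    (∀ i, (∑ f, if f i = true then w f else 0) ≤ 0.01) →
    1.02 * (∑ f, negMulLog (w f)) ≤ ∑ T, negMulLog (uconv w T) := by
  intro n
  induction n with
  | zero =>
    intro w hw hsum _
    have hd : ∀ f g : Fin 0 → Bool, f = g := fun f g => funext fun i => i.elim0
    have huniv : (univ : Finset (Fin 0 → Bool)) = {fun i => i.elim0} :=
      Finset.eq_singleton_iff_unique_mem.2 ⟨mem_univ _, fun x _ => hd x _⟩
    rw [huniv, Finset.sum_singleton] at hsum
    rw [huniv, Finset.sum_singleton, Finset.sum_singleton]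
    have hu : uconv w (fun i => i.elim0) = 1 := by
      unfold uconv
      rw [huniv, Finset.sum_singleton, Finset.sum_singleton, if_pos (hd _ _), hsum, mul_one]
    rw [hu, hsum]
    simp
  | succ n IH =>
    intro w hw hsum hmarg
    set α : (Fin n → Bool) → ℝ := fun s => w (Fin.cons false s) + w (Fin.cons true s) with hα
    set ν : (Fin n → Bool) → ℝ := fun s => w (Fin.cons true s) with hν
    set p : (Fin n → Bool) → ℝ := fun s => ν s / α s with hp
    have hα0 : ∀ s, 0 ≤ α s := fun s => add_nonneg (hw _) (hw _)
    have hν0 : ∀ s, 0 ≤ ν s := fun s => hw _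
    have hνα : ∀ s, ν s ≤ α s := fun s => le_add_of_nonneg_left (hw _)
    have hp0 : ∀ s, 0 ≤ p s := fun s => div_nonneg (hν0 s) (hα0 s)
    have hp1 : ∀ s, p s ≤ 1 := by
      intro s
      rcases eq_or_lt_of_le (hα0 s) with h | h
      · simp only [hp]; rw [← h]; simp
      · exact div_le_one_of_le₀ (hνα s) (hα0 s)
    have hpid : ∀ s, α s * p s = ν s := by
      intro s
      rcases eq_or_lt_of_le (hα0 s) with h | h
      · have hν' : ν s = 0 := le_antisymm (h ▸ hνα s) (hν0 s)
        simp only [hp]; rw [← h, hν']; simp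
      · simp only [hp]; field_simp
    have hαsum : ∑ s, α s = 1 := by rw [← hsum, sum_cons w]
    have hμ : ∑ s, ν s ≤ 0.01 := by
      have h0 := hmarg 0
      rw [sum_cons (fun f => if f 0 = true then w f else 0)] at h0
      simp only [Fin.cons_zero] at h0
      simpa using h0
    have hαmarg : ∀ i : Fin n, (∑ s, if s i = true then α s else 0) ≤ 0.01 := by
      intro i
      have h0 := hmarg i.succ
      rw [sum_cons (fun f => if f i.succ = true then w f else 0)] at h0
      simp only [Fin.cons_succ] at h0
      have : (∑ s, if s i = true then α s else 0)
          = ∑ s : Fin n → Bool, ((if s i = true then w (Fin.cons false s) else 0)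
            + (if s i = true then w (Fin.cons true s) else 0)) := by
        apply Finset.sum_congr rfl
        intro s _
        split <;> simp [hα]
      rw [this]; exact h0
    -- entropy decomposition of w
    have Hw : ∑ f, negMulLog (w f)
        = (∑ s, negMulLog (α s)) + ∑ s, α s * binEntropy (p s) := by
      rw [sum_cons (fun f => negMulLog (w f)), ← Finset.sum_add_distrib]
      apply Finset.sum_congr rfl
      intro s _
      exact nml_pair (hw (Fin.cons false s)) (hw (Fin.cons true s))
    -- values of the union convolution on cons
    have hWfalse : ∀ t, uconv w (Fin.cons false t)
        = ∑ s₁ : Fin n → Bool, ∑ s₂ : Fin n → Bool, if orf s₁ s₂ = t then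
            (α s₁ - ν s₁) * (α s₂ - ν s₂) else 0 := by
      intro t
      unfold uconv
      rw [sum_cons2 (fun f g => if orf f g = Fin.cons false t then w f * w g else 0)]
      apply Finset.sum_congr rfl; intro s₁ _
      apply Finset.sum_congr rfl; intro s₂ _
      simp only [orf_cons, Fin.cons_inj, Bool.or_self, Bool.or_true, Bool.true_or,
        Bool.false_or, Bool.or_false]
      simp only [show (true = false) ↔ False by simp, false_and, if_false, add_zero, zero_add,
        true_and, and_true]
      split_ifs with h
      · simp only [hα, hν]; ring
      · rfl
    have hWtrue : ∀ t, uconv w (Fin.cons true t)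
        = ∑ s₁ : Fin n → Bool, ∑ s₂ : Fin n → Bool, if orf s₁ s₂ = t then
            (ν s₁ * α s₂ + α s₁ * ν s₂ - ν s₁ * ν s₂) else 0 := by
      intro t
      unfold uconv
      rw [sum_cons2 (fun f g => if orf f g = Fin.cons true t then w f * w g else 0)]
      apply Finset.sum_congr rfl; intro s₁ _
      apply Finset.sum_congr rfl; intro s₂ _
      simp only [orf_cons, Fin.cons_inj, Bool.or_self, Bool.or_true, Bool.true_or,
        Bool.false_or, Bool.or_false]
      simp only [show (false = true) ↔ False by simp, false_and, if_false, add_zero, zero_add,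
        true_and, and_true]
      split_ifs with h
      · simp only [hα, hν]; ring
      · ring
    have hA : ∀ t, uconv w (Fin.cons false t) + uconv w (Fin.cons true t) = uconv α t := by
      intro t
      rw [hWfalse, hWtrue]
      unfold uconv
      rw [← Finset.sum_add_distrib]
      apply Finset.sum_congr rfl; intro s₁ _
      rw [← Finset.sum_add_distrib]
      apply Finset.sum_congr rfl; intro s₂ _
      split_ifs with h
      · ring
      · ring
    have hN : ∀ t, uconv w (Fin.cons true t)
        = ∑ s₁ : Fin n → Bool, ∑ s₂ : Fin n → Bool, if orf s₁ s₂ = t then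
            (α s₁ * α s₂ * (p s₁ + p s₂ - p s₁ * p s₂)) else 0 := by
      intro t
      rw [hWtrue]
      apply Finset.sum_congr rfl; intro s₁ _
      apply Finset.sum_congr rfl; intro s₂ _
      split_ifs with h
      · have e : α s₁ * α s₂ * (p s₁ + p s₂ - p s₁ * p s₂)
            = (α s₁ * p s₁) * α s₂ + α s₁ * (α s₂ * p s₂) - (α s₁ * p s₁) * (α s₂ * p s₂) := by
          ring
        rw [e, hpid s₁, hpid s₂]
      · rfl
    -- entropy decomposition of uconv w
    have HW2 : ∑ T, negMulLog (uconv w T)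
        = (∑ t, negMulLog (uconv α t))
          + ∑ t, (uconv α t) * binEntropy (uconv w (Fin.cons true t) / uconv α t) := by
      rw [sum_cons (fun T => negMulLog (uconv w T)), ← Finset.sum_add_distrib]
      apply Finset.sum_congr rfl
      intro t _
      have h := nml_pair (uconv_nonneg w hw (Fin.cons false t)) (uconv_nonneg w hw (Fin.cons true t))
      rw [hA t] at h
      exact h
    -- Jensen per t
    have hJen : ∀ t, (∑ s₁ : Fin n → Bool, ∑ s₂ : Fin n → Bool, if orf s₁ s₂ = t then
            (α s₁ * α s₂ * binEntropy (p s₁ + p s₂ - p s₁ * p s₂)) else 0)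
        ≤ (uconv α t) * binEntropy (uconv w (Fin.cons true t) / uconv α t) := by
      intro t
      have hJ := jensen_binEntropy (univ : Finset ((Fin n → Bool) × (Fin n → Bool)))
        (fun q => if orf q.1 q.2 = t then α q.1 * α q.2 else 0)
        (fun q => p q.1 + p q.2 - p q.1 * p q.2)
        (fun q _ => by split_ifs; exacts [mul_nonneg (hα0 _) (hα0 _), le_refl 0])
        (fun q _ => by nlinarith [hp0 q.1, hp0 q.2, hp1 q.1, hp1 q.2])
        (fun q _ => by nlinarith [hp0 q.1, hp0 q.2, hp1 q.1, hp1 q.2])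
      have e1 : (∑ q : (Fin n → Bool) × (Fin n → Bool),
          if orf q.1 q.2 = t then α q.1 * α q.2 else 0) = uconv α t := by
        unfold uconv
        rw [Fintype.sum_prod_type]
      have e2 : (∑ q : (Fin n → Bool) × (Fin n → Bool),
          (if orf q.1 q.2 = t then α q.1 * α q.2 else 0) * (p q.1 + p q.2 - p q.1 * p q.2))
          = uconv w (Fin.cons true t) := by
        rw [hN t, Fintype.sum_prod_type]
        apply Finset.sum_congr rfl; intro s₁ _
        apply Finset.sum_congr rfl; intro s₂ _
        rw [ite_mul, zero_mul]
      have e3 : (∑ q : (Fin n → Bool) × (Fin n → Bool),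
          (if orf q.1 q.2 = t then α q.1 * α q.2 else 0) * binEntropy (p q.1 + p q.2 - p q.1 * p q.2))
          = ∑ s₁ : Fin n → Bool, ∑ s₂ : Fin n → Bool, if orf s₁ s₂ = t then
            (α s₁ * α s₂ * binEntropy (p s₁ + p s₂ - p s₁ * p s₂)) else 0 := by
        rw [Fintype.sum_prod_type]
        apply Finset.sum_congr rfl; intro s₁ _
        apply Finset.sum_congr rfl; intro s₂ _
        rw [ite_mul, zero_mul]
      rw [e1, e2, e3] at hJ
      exact hJ
    -- sum over t of the Jensen LHS
    have hcollect : (∑ t : Fin n → Bool, ∑ s₁ : Fin n → Bool, ∑ s₂ : Fin n → Bool,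
          if orf s₁ s₂ = t then (α s₁ * α s₂ * binEntropy (p s₁ + p s₂ - p s₁ * p s₂)) else 0)
        = ∑ s₁ : Fin n → Bool, ∑ s₂ : Fin n → Bool,
            α s₁ * α s₂ * binEntropy (p s₁ + p s₂ - p s₁ * p s₂) := by
      rw [Finset.sum_comm]
      apply Finset.sum_congr rfl; intro s₁ _
      rw [Finset.sum_comm]
      apply Finset.sum_congr rfl; intro s₂ _
      rw [Finset.sum_ite_eq univ (orf s₁ s₂)
        (fun _ => α s₁ * α s₂ * binEntropy (p s₁ + p s₂ - p s₁ * p s₂))]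
      simp
    -- the key inequality application
    set E : ℝ := ∑ s, α s * binEntropy (p s) with hE
    have hE0 : 0 ≤ E := Finset.sum_nonneg fun s _ =>
      mul_nonneg (hα0 s) (binEntropy_nonneg (hp0 s) (hp1 s))
    have hSp : ∑ s, α s * p s ≤ 0.01 := by
      have : ∀ s : Fin n → Bool, α s * p s = ν s := hpid
      rw [Finset.sum_congr rfl fun s _ => this s]
      exact hμ
    have hSp0 : 0 ≤ ∑ s, α s * p s := Finset.sum_nonneg fun s _ => mul_nonneg (hα0 s) (hp0 s)
    have hkey : 1.02 * E ≤ ∑ s₁ : Fin n → Bool, ∑ s₂ : Fin n → Bool,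
        α s₁ * α s₂ * binEntropy (p s₁ + p s₂ - p s₁ * p s₂) := by
      have step1 : ∑ s₁ : Fin n → Bool, ∑ s₂ : Fin n → Bool,
          (α s₁ * α s₂ * (0.52 * (binEntropy (p s₁) + binEntropy (p s₂))
            - (p s₁ * binEntropy (p s₂) + p s₂ * binEntropy (p s₁))))
          ≤ ∑ s₁ : Fin n → Bool, ∑ s₂ : Fin n → Bool,
            α s₁ * α s₂ * binEntropy (p s₁ + p s₂ - p s₁ * p s₂) := by
        apply Finset.sum_le_sum; intro s₁ _
        apply Finset.sum_le_sum; intro s₂ _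
        exact mul_le_mul_of_nonneg_left
          (keyIneq (hp0 s₁) (hp1 s₁) (hp0 s₂) (hp1 s₂))
          (mul_nonneg (hα0 s₁) (hα0 s₂))
      have step2 : ∑ s₁ : Fin n → Bool, ∑ s₂ : Fin n → Bool,
          (α s₁ * α s₂ * (0.52 * (binEntropy (p s₁) + binEntropy (p s₂))
            - (p s₁ * binEntropy (p s₂) + p s₂ * binEntropy (p s₁))))
          = 0.52 * (E * (∑ s, α s)) + 0.52 * ((∑ s, α s) * E)
            - ((∑ s, α s * p s) * E + E * (∑ s, α s * p s)) := by
        rw [Finset.sum_mul_sum, Finset.sum_mul_sum, Finset.sum_mul_sum, Finset.sum_mul_sum]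
        rw [Finset.mul_sum, Finset.mul_sum, ← Finset.sum_add_distrib, ← Finset.sum_add_distrib,
          ← Finset.sum_sub_distrib]
        apply Finset.sum_congr rfl; intro s₁ _
        rw [Finset.mul_sum, Finset.mul_sum, ← Finset.sum_add_distrib, ← Finset.sum_add_distrib,
          ← Finset.sum_sub_distrib]
        apply Finset.sum_congr rfl; intro s₂ _
        ring
      rw [step2, hαsum] at step1
      have : 1.02 * E ≤ 0.52 * (E * 1) + 0.52 * (1 * E)
          - ((∑ s, α s * p s) * E + E * (∑ s, α s * p s)) := by
        nlinarith [mul_le_mul_of_nonneg_right hSp hE0]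
      linarith
    -- assemble
    have hIH := IH α hα0 hαsum hαmarg
    have hsumJen : (∑ t : Fin n → Bool, ∑ s₁ : Fin n → Bool, ∑ s₂ : Fin n → Bool,
          if orf s₁ s₂ = t then (α s₁ * α s₂ * binEntropy (p s₁ + p s₂ - p s₁ * p s₂)) else 0)
        ≤ ∑ t, (uconv α t) * binEntropy (uconv w (Fin.cons true t) / uconv α t) :=
      Finset.sum_le_sum fun t _ => hJen t
    rw [hcollect] at hsumJen
    rw [Hw, HW2]
    linarith

theorem stmt10 (n : ℕ) (F : Finset (Finset (Fin n))) (hne : F.Nonempty)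
    (hF : F ≠ {∅}) (hclosed : ∀ A ∈ F, ∀ B ∈ F, A ∪ B ∈ F) :
    ∃ i : Fin n,
      (0.01 : ℝ) * F.card ≤ ((F.filter (fun s => i ∈ s)).card : ℝ) := by
  by_contra hcon
  push_neg at hcon
  have hm0 : 0 < F.card := Finset.card_pos.2 hne
  -- rule out the singleton case
  rcases eq_or_lt_of_le (Nat.one_le_iff_ne_zero.2 (Nat.pos_iff_ne_zero.1 hm0)) with h1 | h2
  · obtain ⟨A, hA⟩ := Finset.card_eq_one.1 h1.symm
    have hAne : A ≠ ∅ := by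
      intro hAe
      apply hF
      rw [hA, hAe]
    obtain ⟨i, hi⟩ := Finset.nonempty_iff_ne_empty.2 hAne
    have := hcon i
    rw [hA] at this
    rw [Finset.filter_singleton] at this
    rw [if_pos hi] at this
    simp [hA] at this
    norm_num at this
  -- main case : F.card ≥ 2
  set m : ℕ := F.card with hm
  have hm2 : 2 ≤ m := h2
  set enc : Finset (Fin n) → (Fin n → Bool) := fun S i => decide (i ∈ S) with henc
  have hencinj : Function.Injective enc := by
    intro A B hAB
    ext i
    have := congrFun hAB i
    simpa [henc] using this
  have henc_or : ∀ A B, enc (A ∪ B) = orf (enc A) (enc B) := by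
    intro A B
    funext i
    simp [henc, orf, Finset.mem_union]
  set F' : Finset (Fin n → Bool) := F.image enc with hF'
  have hcard' : F'.card = m := Finset.card_image_of_injective F hencinj
  set c : ℝ := (m : ℝ)⁻¹ with hc
  have hc0 : 0 < c := by positivity
  set w : (Fin n → Bool) → ℝ := fun f => if f ∈ F' then c else 0 with hwdef
  have hw0 : ∀ f, 0 ≤ w f := by
    intro f; rw [hwdef]; dsimp only; split_ifs; exacts [hc0.le, le_refl 0]
  have hwsum : ∑ f, w f = 1 := by
    simp only [hwdef]
    rw [Finset.sum_ite_mem, Finset.univ_inter, Finset.sum_const, hcard', nsmul_eq_mul]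
    rw [hc, mul_inv_cancel₀ (by positivity : ((m:ℝ)) ≠ 0)]
  have hclosed' : ∀ f ∈ F', ∀ g ∈ F', orf f g ∈ F' := by
    intro f hf g hg
    obtain ⟨A, hA, rfl⟩ := Finset.mem_image.1 hf
    obtain ⟨B, hB, rfl⟩ := Finset.mem_image.1 hg
    rw [← henc_or]
    exact Finset.mem_image_of_mem enc (hclosed A hA B hB)
  have hmarg : ∀ i, (∑ f, if f i = true then w f else 0) ≤ 0.01 := by
    intro i
    have hle := hcon i
    have e1 : (∑ f, if f i = true then w f else 0)
        = ∑ f ∈ F', (if f i = true then c else 0) := by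
      simp only [hwdef]
      rw [show (∑ f : Fin n → Bool, if f i = true then (if f ∈ F' then c else 0) else 0)
          = ∑ f : Fin n → Bool, (if f ∈ F' then (if f i = true then c else 0) else 0) from
        Finset.sum_congr rfl (fun f _ => by split_ifs <;> rfl)]
      rw [Finset.sum_ite_mem, Finset.univ_inter]
    have e2 : ∑ f ∈ F', (if f i = true then c else 0)
        = ∑ S ∈ F, (if i ∈ S then c else 0) := by
      rw [hF', Finset.sum_image (fun A _ B _ h => hencinj h)]
      apply Finset.sum_congr rfl
      intro S _
      simp [henc]
    rw [e1, e2, ← Finset.sum_filter]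
    rw [Finset.sum_const, nsmul_eq_mul]
    rw [hc]
    have hmR : (0:ℝ) < (m:ℝ) := by positivity
    rw [mul_inv_le_iff₀ hmR]
    have : ((Finset.filter (fun s => i ∈ s) F).card : ℝ) = ((Finset.filter (fun a => i ∈ a) F).card : ℝ) := rfl
    nlinarith [hle]
  have hent : ∑ f, negMulLog (w f) = Real.log m := by
    simp only [hwdef]
    rw [show (∑ f, negMulLog (if f ∈ F' then c else 0))
        = ∑ f, (if f ∈ F' then negMulLog c else 0) from
      Finset.sum_congr rfl (fun f _ => by split_ifs <;> simp)]
    rw [Finset.sum_ite_mem, Finset.univ_inter, Finset.sum_const, hcard', nsmul_eq_mul]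
    rw [hc, negMulLog, Real.log_inv]
    have hmR : ((m:ℝ)) ≠ 0 := by positivity
    field_simp
  have hmain := gilmer_ind n w hw0 hwsum hmarg
  rw [hent] at hmain
  -- upper bound via maxent
  have hvanish : ∀ T ∉ F', uconv w T = 0 := by
    intro T hT
    apply Finset.sum_eq_zero
    intro f _
    apply Finset.sum_eq_zero
    intro g _
    split_ifs with hfg
    · by_cases hf : f ∈ F'
      · by_cases hg : g ∈ F'
        · exact absurd (hfg ▸ hclosed' f hf g hg) hT
        · simp [hwdef, hg]
      · simp [hwdef, hf]
    · rfl
  have huconv_sum : ∑ T, uconv w T = 1 := by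
    unfold uconv
    rw [Finset.sum_comm]
    rw [show (∑ f : Fin n → Bool, ∑ T : Fin n → Bool, ∑ g : Fin n → Bool,
        if orf f g = T then w f * w g else 0)
      = ∑ f : Fin n → Bool, ∑ g : Fin n → Bool, ∑ T : Fin n → Bool,
        (if orf f g = T then w f * w g else 0) from
      Finset.sum_congr rfl (fun f _ => Finset.sum_comm)]
    have : ∀ f g : Fin n → Bool, (∑ T : Fin n → Bool,
        if orf f g = T then w f * w g else 0) = w f * w g := by
      intro f g
      rw [Finset.sum_ite_eq univ (orf f g) (fun _ => w f * w g)]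
      simp
    rw [Finset.sum_congr rfl (fun f _ => Finset.sum_congr rfl (fun g _ => this f g))]
    rw [← Finset.sum_mul_sum]
    rw [hwsum]; norm_num
  have hsubF : ∑ T ∈ F', uconv w T = 1 := by
    rw [← huconv_sum]
    exact Finset.sum_subset (Finset.subset_univ F') (fun x _ hx => hvanish x hx)
  have hsubF2 : ∑ T ∈ F', negMulLog (uconv w T) = ∑ T, negMulLog (uconv w T) := by
    exact Finset.sum_subset (Finset.subset_univ F') (fun x _ hx => by rw [hvanish x hx]; simp)
  have hup := maxent F' (fun T => uconv w T) (fun T _ => uconv_nonneg w hw0 T) hsubF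
  rw [hsubF2, hcard'] at hup
  -- contradiction
  have hlog2 : (0:ℝ) < Real.log m := by
    apply Real.log_pos
    exact_mod_cast Nat.lt_of_lt_of_le Nat.one_lt_two hm2
  nlinarith [hmain, hup]
end

section
/- Let p = (3 - √5)/2. Then H(2p - p²) = H(p), where H is the binary entropy function. Moreover, for 0 < p < (3-√5)/2 one has H(2p - p²) > H(p), and for (3-√5)/2 < p < 1 one has H(2p - p²) < H(p). -/
open Finset

attribute [local instance] Classical.propDecidable

lemma binEnt_one_sub (x : ℝ) : binEnt (1 - x) = binEnt x := by
  rw [binEnt_eq, binEnt_eq, Real.binEntropy_one_sub]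

lemma binEnt_key {x y : ℝ} (h0 : 0 ≤ x) (h1 : x < y) (h2 : y < 1 - x) :
    binEnt x < binEnt y := by
  have hlog : (0:ℝ) < Real.log 2 := Real.log_pos (by norm_num)
  rw [binEnt_eq, binEnt_eq, div_lt_div_iff_of_pos_right hlog]
  have hx2 : x ≤ 2⁻¹ := by linarith
  rcases le_or_gt y 2⁻¹ with hy | hy
  · exact Real.binEntropy_strictMonoOn ⟨h0, hx2⟩ ⟨by linarith, hy⟩ h1
  · rw [← Real.binEntropy_one_sub y]
    exact Real.binEntropy_strictMonoOn ⟨h0, hx2⟩ ⟨by linarith, by linarith⟩ (by linarith)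

theorem stmt14 :
    binEnt (2 * ((3 - Real.sqrt 5) / 2) - ((3 - Real.sqrt 5) / 2) ^ 2)
        = binEnt ((3 - Real.sqrt 5) / 2) ∧
    (∀ p : ℝ, 0 < p → p < (3 - Real.sqrt 5) / 2 → binEnt (2 * p - p ^ 2) > binEnt p) ∧
    (∀ p : ℝ, (3 - Real.sqrt 5) / 2 < p → p < 1 → binEnt (2 * p - p ^ 2) < binEnt p) := by
  have hs : Real.sqrt 5 ^ 2 = 5 := Real.sq_sqrt (by norm_num)
  have hs1 : 2 < Real.sqrt 5 := by nlinarith [Real.sqrt_nonneg 5]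
  have hs2 : Real.sqrt 5 < 3 := by nlinarith [Real.sqrt_nonneg 5]
  refine ⟨?_, ?_, ?_⟩
  · have h : 2 * ((3 - Real.sqrt 5) / 2) - ((3 - Real.sqrt 5) / 2) ^ 2
        = 1 - (3 - Real.sqrt 5) / 2 := by nlinarith
    rw [h, binEnt_one_sub]
  · intro p hp hp'
    have hphalf : p < 1/2 := by nlinarith
    exact binEnt_key hp.le (by nlinarith) (by nlinarith)
  · intro p hp hp'
    have h : 2 * p - p ^ 2 = 1 - (1 - p) ^ 2 := by ring
    rw [h, binEnt_one_sub]
    exact binEnt_key (by positivity) (by nlinarith) (by nlinarith)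
end

section
/- There exist finite random variables X, C, X', C' with (X', C') an independent copy of (X, C), and a function f, such that H(f(X, X')) ≥ H(X) but H(f(X, X') | C, C') < H(X | C). Concretely: let C be uniform on {0,1,2,3}, let X | C be uniform on {0,2} if C ∈ {0,2} and uniform on {1,3} if C ∈ {1,3}, and f(x, x') = (x mod 2, x' mod 2); then H(f(X,X')) = H(X) = 2, H(X|C) = 1, H(f(X,X') | C, C') = 0. -/
open Finset

attribute [local instance] Classical.propDecidable

/-- Shannon entropy (base 2) of a probability mass function on a finite type. -/
noncomputable def ent {α : Type*} [Fintype α] (f : α → ℝ) : ℝ :=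
  ∑ x, -(f x * Real.logb 2 (f x))

/-- Distribution of the random variable `X` under the pmf `μ` on `Ω`. -/
noncomputable def probOf {Ω α : Type*} [Fintype Ω] [Fintype α] (μ : Ω → ℝ) (X : Ω → α) : α → ℝ :=
  fun a => ∑ ω ∈ Finset.univ.filter (fun ω => X ω = a), μ ω

/-- Shannon entropy (base 2) of a random variable `X` under pmf `μ`. -/
noncomputable def entRV {Ω α : Type*} [Fintype Ω] [Fintype α] (μ : Ω → ℝ) (X : Ω → α) : ℝ :=
  ent (probOf μ X)

/-- Conditional Shannon entropy `H(X | Y) = H(X, Y) - H(Y)`. -/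
noncomputable def condEnt {Ω α β : Type*} [Fintype Ω] [Fintype α] [Fintype β]
    (μ : Ω → ℝ) (X : Ω → α) (Y : Ω → β) : ℝ :=
  entRV μ (fun ω => (X ω, Y ω)) - entRV μ Y

/-- Joint pmf of `(X, C)`: `C` uniform on `Fin 4`, and given `C = c`, `X` uniform on the
two elements of `Fin 4` with the same parity as `c`. -/
noncomputable def mu15 : Fin 4 × Fin 4 → ℝ :=
  fun xc => if xc.1.val % 2 = xc.2.val % 2 then 1 / 8 else 0

/-- Product pmf for the independent copy `((X, C), (X', C'))`. -/
noncomputable def nu15 : (Fin 4 × Fin 4) × (Fin 4 × Fin 4) → ℝ :=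
  fun ab => mu15 ab.1 * mu15 ab.2

lemma lb4 : Real.logb 2 (1/4) = -2 := by
  rw [show (1/4:ℝ) = ((2:ℝ)^(2:ℕ))⁻¹ by norm_num, Real.logb_inv, Real.logb_pow,
    Real.logb_self_eq_one (by norm_num)]; norm_num

lemma lb8 : Real.logb 2 (1/8) = -3 := by
  rw [show (1/8:ℝ) = ((2:ℝ)^(3:ℕ))⁻¹ by norm_num, Real.logb_inv, Real.logb_pow,
    Real.logb_self_eq_one (by norm_num)]; norm_num

lemma lb16 : Real.logb 2 (1/16) = -4 := by
  rw [show (1/16:ℝ) = ((2:ℝ)^(4:ℕ))⁻¹ by norm_num, Real.logb_inv, Real.logb_pow,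
    Real.logb_self_eq_one (by norm_num)]; norm_num

lemma lb2 : Real.logb 2 (1/2) = -1 := by
  rw [show (1/2:ℝ) = ((2:ℝ)^(1:ℕ))⁻¹ by norm_num, Real.logb_inv, Real.logb_pow,
    Real.logb_self_eq_one (by norm_num)]; norm_num

lemma probOf_prod {Ω₁ Ω₂ α β : Type*} [Fintype Ω₁] [Fintype Ω₂] [Fintype α] [Fintype β]
    (μ : Ω₁ → ℝ) (ν : Ω₂ → ℝ) (F : Ω₁ → α) (G : Ω₂ → β) (p : α × β) :
    probOf (fun ab : Ω₁ × Ω₂ => μ ab.1 * ν ab.2) (fun ab : Ω₁ × Ω₂ => (F ab.1, G ab.2)) p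
      = probOf μ F p.1 * probOf ν G p.2 := by
  unfold probOf
  rw [Finset.sum_filter, Fintype.sum_prod_type, Finset.sum_filter, Finset.sum_filter,
    Finset.sum_mul_sum]
  refine Finset.sum_congr rfl fun a _ => Finset.sum_congr rfl fun b _ => ?_
  by_cases h1 : F a = p.1 <;> by_cases h2 : G b = p.2 <;>
    simp [Prod.ext_iff, h1, h2]

lemma entRV_comp_inj {Ω α β : Type*} [Fintype Ω] [Fintype α] [Fintype β]
    (μ : Ω → ℝ) (X : Ω → α) (σ : α → β) (hσ : Function.Injective σ) :
    entRV μ (fun ω => σ (X ω)) = entRV μ X := by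
  unfold entRV ent
  rw [← Finset.sum_subset (Finset.subset_univ (Finset.image σ Finset.univ))]
  · rw [Finset.sum_image (fun a _ a' _ h => hσ h)]
    refine Finset.sum_congr rfl fun a _ => ?_
    have : probOf μ (fun ω => σ (X ω)) (σ a) = probOf μ X a := by
      unfold probOf
      congr 1
      ext ω
      simp [hσ.eq_iff]
    rw [this]
  · intro b _ hb
    have : probOf μ (fun ω => σ (X ω)) b = 0 := by
      unfold probOf
      rw [Finset.filter_false_of_mem, Finset.sum_empty]
      intro ω _ h
      exact hb (Finset.mem_image.2 ⟨X ω, Finset.mem_univ _, h⟩)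
    rw [this]
    simp

lemma hq : probOf mu15 (fun a : Fin 4 × Fin 4 => (a.1.val % 2 == 1)) = fun _ => 1/2 := by
  funext b
  cases b <;>
  · simp only [probOf, mu15, Fintype.sum_prod_type, Fin.sum_univ_four, Finset.sum_filter,
      show ((3:Fin 4)).val = 3 from rfl, show ((2:Fin 4)).val = 2 from rfl,
      show ((1:Fin 4)).val = 1 from rfl, show ((0:Fin 4)).val = 0 from rfl]
    norm_num

lemma hsnd : probOf mu15 (Prod.snd : Fin 4 × Fin 4 → Fin 4) = fun _ => 1/4 := by
  funext c
  fin_cases c <;>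
  · simp only [probOf, mu15, Fintype.sum_prod_type, Fin.sum_univ_four, Finset.sum_filter,
      show ((3:Fin 4)).val = 3 from rfl, show ((2:Fin 4)).val = 2 from rfl,
      show ((1:Fin 4)).val = 1 from rfl, show ((0:Fin 4)).val = 0 from rfl]
    norm_num [Fin.ext_iff, show ((3:Fin 4)).val = 3 from rfl, show ((2:Fin 4)).val = 2 from rfl, show ((1:Fin 4)).val = 1 from rfl, show ((0:Fin 4)).val = 0 from rfl]

lemma hK : probOf mu15 (fun a : Fin 4 × Fin 4 => ((a.1.val % 2 == 1), a.2))
    = fun bc => if (bc.2.val % 2 == 1) = bc.1 then 1/4 else 0 := by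
  funext bc
  obtain ⟨b, c⟩ := bc
  cases b <;> fin_cases c <;>
  · simp only [probOf, mu15, Fintype.sum_prod_type, Fin.sum_univ_four, Finset.sum_filter,
      show ((3:Fin 4)).val = 3 from rfl, show ((2:Fin 4)).val = 2 from rfl,
      show ((1:Fin 4)).val = 1 from rfl, show ((0:Fin 4)).val = 0 from rfl]
    norm_num [Prod.ext_iff, Fin.ext_iff, show ((3:Fin 4)).val = 3 from rfl, show ((2:Fin 4)).val = 2 from rfl, show ((1:Fin 4)).val = 1 from rfl, show ((0:Fin 4)).val = 0 from rfl]

set_option maxHeartbeats 2000000 in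
theorem stmt15 :
    entRV nu15 (fun ω => ((ω.1.1.val % 2 == 1), (ω.2.1.val % 2 == 1))) = 2 ∧
    entRV mu15 Prod.fst = 2 ∧
    condEnt mu15 Prod.fst Prod.snd = 1 ∧
    condEnt nu15 (fun ω => ((ω.1.1.val % 2 == 1), (ω.2.1.val % 2 == 1)))
      (fun ω => (ω.1.2, ω.2.2)) = 0 := by
  have part1 : entRV nu15 (fun ω => ((ω.1.1.val % 2 == 1), (ω.2.1.val % 2 == 1))) = 2 := by
    have : probOf nu15 (fun ω => ((ω.1.1.val % 2 == 1), (ω.2.1.val % 2 == 1)))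
        = fun p : Bool × Bool => (1/2 : ℝ) * (1/2) := by
      funext p
      rw [show nu15 = (fun ab => mu15 ab.1 * mu15 ab.2) from rfl]
      rw [probOf_prod mu15 mu15 (fun a => (a.1.val % 2 == 1)) (fun a => (a.1.val % 2 == 1)) p, hq]
    rw [entRV, this]
    simp only [ent, Fintype.sum_prod_type, Fintype.sum_bool]
    norm_num [lb4]
  have part2 : entRV mu15 Prod.fst = 2 := by
    simp only [entRV, ent, probOf, mu15, Fintype.sum_prod_type, Fin.sum_univ_four,
      Finset.sum_filter, show ((3:Fin 4)).val = 3 from rfl, show ((2:Fin 4)).val = 2 from rfl,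
      show ((1:Fin 4)).val = 1 from rfl, show ((0:Fin 4)).val = 0 from rfl]
    norm_num [lb4, Fin.ext_iff, show ((3:Fin 4)).val = 3 from rfl,
      show ((2:Fin 4)).val = 2 from rfl, show ((1:Fin 4)).val = 1 from rfl,
      show ((0:Fin 4)).val = 0 from rfl]
  have hsnd2 : entRV mu15 (Prod.snd : Fin 4 × Fin 4 → Fin 4) = 2 := by
    rw [entRV, hsnd]
    simp only [ent, Fin.sum_univ_four]
    norm_num [lb4]
  have part3 : condEnt mu15 Prod.fst Prod.snd = 1 := by
    rw [condEnt, hsnd2]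
    have hjoint : entRV mu15 (fun ω => (ω.1, ω.2)) = 3 := by
      simp only [entRV, ent, probOf, mu15, Fintype.sum_prod_type, Fin.sum_univ_four,
        Finset.sum_filter, show ((3:Fin 4)).val = 3 from rfl, show ((2:Fin 4)).val = 2 from rfl,
        show ((1:Fin 4)).val = 1 from rfl, show ((0:Fin 4)).val = 0 from rfl]
      norm_num [lb8, Prod.ext_iff, Fin.ext_iff, show ((3:Fin 4)).val = 3 from rfl,
        show ((2:Fin 4)).val = 2 from rfl, show ((1:Fin 4)).val = 1 from rfl,
        show ((0:Fin 4)).val = 0 from rfl]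
    rw [hjoint]
    norm_num
  have hcc : entRV nu15 (fun ω : (Fin 4 × Fin 4) × (Fin 4 × Fin 4) => (ω.1.2, ω.2.2)) = 4 := by
    have : probOf nu15 (fun ω : (Fin 4 × Fin 4) × (Fin 4 × Fin 4) => (ω.1.2, ω.2.2))
        = fun _ : Fin 4 × Fin 4 => (1/4 : ℝ) * (1/4) := by
      funext p
      rw [show nu15 = (fun ab => mu15 ab.1 * mu15 ab.2) from rfl]
      rw [probOf_prod mu15 mu15 Prod.snd Prod.snd p, hsnd]
    rw [entRV, this]
    simp only [ent, Fintype.sum_prod_type, Fin.sum_univ_four]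
    norm_num [lb16]
  have part4 : condEnt nu15 (fun ω => ((ω.1.1.val % 2 == 1), (ω.2.1.val % 2 == 1)))
      (fun ω => (ω.1.2, ω.2.2)) = 0 := by
    rw [condEnt, hcc]
    have hσ : Function.Injective
        (fun q : (Bool × Fin 4) × (Bool × Fin 4) => ((q.1.1, q.2.1), (q.1.2, q.2.2))) := by
      intro a b h
      simp only [Prod.ext_iff] at h ⊢
      obtain ⟨⟨h1, h2⟩, h3, h4⟩ := h
      exact ⟨⟨h1, h3⟩, h2, h4⟩
    have hre : entRV nu15 (fun ω => (((ω.1.1.val % 2 == 1), (ω.2.1.val % 2 == 1)),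
        (ω.1.2, ω.2.2))) = entRV nu15
        (fun ω : (Fin 4 × Fin 4) × (Fin 4 × Fin 4) =>
          (((ω.1.1.val % 2 == 1), ω.1.2), ((ω.2.1.val % 2 == 1), ω.2.2))) :=
      entRV_comp_inj nu15
        (fun ω : (Fin 4 × Fin 4) × (Fin 4 × Fin 4) =>
          (((ω.1.1.val % 2 == 1), ω.1.2), ((ω.2.1.val % 2 == 1), ω.2.2)))
        (fun q : (Bool × Fin 4) × (Bool × Fin 4) => ((q.1.1, q.2.1), (q.1.2, q.2.2))) hσ
    rw [hre]
    have : probOf nu15 (fun ω : (Fin 4 × Fin 4) × (Fin 4 × Fin 4) =>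
          (((ω.1.1.val % 2 == 1), ω.1.2), ((ω.2.1.val % 2 == 1), ω.2.2)))
        = fun p : (Bool × Fin 4) × (Bool × Fin 4) =>
          (if (p.1.2.val % 2 == 1) = p.1.1 then (1/4 : ℝ) else 0)
            * (if (p.2.2.val % 2 == 1) = p.2.1 then (1/4 : ℝ) else 0) := by
      funext p
      rw [show nu15 = (fun ab => mu15 ab.1 * mu15 ab.2) from rfl]
      rw [probOf_prod mu15 mu15 (fun a => ((a.1.val % 2 == 1), a.2))
        (fun a => ((a.1.val % 2 == 1), a.2)) p, hK]
    rw [entRV, this]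
    simp only [ent, Fintype.sum_prod_type, Fintype.sum_bool, Fin.sum_univ_four,
      show ((3:Fin 4)).val = 3 from rfl, show ((2:Fin 4)).val = 2 from rfl,
      show ((1:Fin 4)).val = 1 from rfl, show ((0:Fin 4)).val = 0 from rfl]
    norm_num [lb16]
  exact ⟨part1, part2, part3, part4⟩
end
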